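/- arXiv:1510.09132 — 4 statements merged into one kernel-verified Lean document; each statement's English description precedes it below -/
import Mathlib

section
/- Let V_1, …, V_n be linear subspaces of ℝ^d with k_j = dim V_j and k_1 + ⋯ + k_n = d. Then for any orthonormal basis w_1, …, w_d of ℝ^d, there is a constant C_d depending only on d such that |V_1 ∧ ⋯ ∧ V_n| ≤ C_d · max ∏_{j=1}^n |V_j ∧ w_{i_{j,k_j+1}} ∧ ⋯ ∧ w_{i_{j,d}}|, where the maximum is taken over all families of indices (i_{j,h})_{1 ≤ j ≤ n, k_j+1 ≤ h ≤ d} with values in {1, …, d} such that each index value i ∈ {1, …, d} occurs exactly n − 1 times among all the i_{j,h}. -/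
open MeasureTheory
open scoped RealInnerProductSpace ENNReal

/-- The absolute value of the determinant of the `d × d` matrix whose columns are the
vectors `v 0, …, v (d-1)` of `ℝ^d`. -/
noncomputable def absDet {d : ℕ} (v : Fin d → EuclideanSpace ℝ (Fin d)) : ℝ :=
  |(Matrix.of fun i j => v j i).det|

/-- `|V 0 ∧ ⋯ ∧ V (n-1)|`: the absolute value of the determinant of the `d × d` matrix whose
columns are orthonormal bases of the subspaces `V j`, listed in order.  (The value is
independent of the choices, so we use the standard orthonormal basis of each subspace;
if the dimensions do not sum to `d` we set the value to `0`.) -/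
noncomputable def subspaceWedge {d n : ℕ}
    (V : Fin n → Submodule ℝ (EuclideanSpace ℝ (Fin d))) : ℝ :=
  if h : Fintype.card ((j : Fin n) × Fin (Module.finrank ℝ ↥(V j))) = d then
    absDet (fun i =>
      (((stdOrthonormalBasis ℝ ↥(V ((Fintype.equivFinOfCardEq h).symm i).1))
        ((Fintype.equivFinOfCardEq h).symm i).2 : ↥(V ((Fintype.equivFinOfCardEq h).symm i).1))
          : EuclideanSpace ℝ (Fin d)))
  else 0

/-- `|V ∧ w 0 ∧ ⋯ ∧ w (m-1)|`: the absolute value of the determinant of the `d × d` matrix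
whose columns are an orthonormal basis of `V` followed by the vectors `w 0, …, w (m-1)`. -/
noncomputable def mixedWedge {d m : ℕ} (V : Submodule ℝ (EuclideanSpace ℝ (Fin d)))
    (w : Fin m → EuclideanSpace ℝ (Fin d)) : ℝ :=
  if h : Module.finrank ℝ ↥V + m = d then
    absDet (fun i =>
      Sum.elim (fun l => ((stdOrthonormalBasis ℝ ↥V) l : EuclideanSpace ℝ (Fin d))) w
        ((finSumFinEquiv.trans (finCongr h)).symm i))
  else 0

section AuxLemmas
open Equiv

def sigFiber {α : Type*} [DecidableEq α] {β : α → Type*} (a : α) :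
    β a ≃ {p : Σ x, β x // p.1 = a} where
  toFun b := ⟨⟨a, b⟩, rfl⟩
  invFun p := p.2 ▸ p.1.2
  left_inv b := rfl
  right_inv := by rintro ⟨⟨x, b⟩, rfl⟩; rfl

lemma sigmaCongrRight_mulSingle {α : Type*} [DecidableEq α] {β : α → Type*}
    [∀ a, DecidableEq (β a)] (a : α) (σ : Equiv.Perm (β a)) :
    Equiv.Perm.sigmaCongrRight (Pi.mulSingle a σ) = σ.extendDomain (sigFiber a) := by
  refine Equiv.ext fun p => ?_
  obtain ⟨x, b⟩ := p
  by_cases h : x = a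
  · subst h
    rw [show ((⟨x, b⟩ : Σ y, β y)) = ((sigFiber x b : {p : Σ y, β y // p.1 = x}) : Σ y, β y)
        from rfl, Equiv.Perm.extendDomain_apply_image]
    simp [sigFiber]
  · rw [Equiv.Perm.extendDomain_apply_not_subtype _ (sigFiber a) (by simpa using h)]
    have : Pi.mulSingle (M := fun a => Equiv.Perm (β a)) a σ x = 1 := Pi.mulSingle_eq_of_ne (M := fun a => Equiv.Perm (β a)) h σ
    simp [Equiv.Perm.sigmaCongrRight, this]

lemma sign_sigmaCongrRight {α : Type*} [DecidableEq α] [Fintype α] {β : α → Type*}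
    [∀ a, DecidableEq (β a)] [∀ a, Fintype (β a)] (π : ∀ a, Equiv.Perm (β a)) :
    Equiv.Perm.sign (Equiv.Perm.sigmaCongrRight π) = ∏ a, Equiv.Perm.sign (π a) := by
  have h1 : Equiv.Perm.sign (Equiv.Perm.sigmaCongrRight π)
      = (Equiv.Perm.sign.comp (Equiv.Perm.sigmaCongrRightHom β)) π := rfl
  rw [h1]
  conv_lhs => rw [← Finset.noncommProd_mulSingle π]
  refine (Finset.map_noncommProd _ _ _ _).trans ?_
  rw [Finset.noncommProd_eq_prod]
  refine Finset.prod_congr rfl fun a _ => ?_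
  show Equiv.Perm.sign (Equiv.Perm.sigmaCongrRight (Pi.mulSingle a (π a))) = _
  rw [sigmaCongrRight_mulSingle, Equiv.Perm.sign_extendDomain]

section
variable {d n : ℕ} {k : Fin n → ℕ}

private def eqv1 (e : ((j : Fin n) × Fin (k j)) ≃ Fin d) :
    Equiv.Perm (Fin d) ≃ (((j : Fin n) × Fin (k j)) ≃ Fin d) where
  toFun σ := e.trans σ
  invFun τ := e.symm.trans τ
  left_inv σ := by ext i; simp
  right_inv τ := by ext p; simp

lemma det_eq_sum_equivs (A : Matrix (Fin d) ((j : Fin n) × Fin (k j)) ℝ)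
    (e : ((j : Fin n) × Fin (k j)) ≃ Fin d) :
    (A.submatrix id ⇑e.symm).det =
      ∑ τ : ((j : Fin n) × Fin (k j)) ≃ Fin d,
        ((Equiv.Perm.sign (e.symm.trans τ) : ℤ) : ℝ) * ∏ p, A (τ p) p := by
  rw [Matrix.det_apply']
  refine Fintype.sum_equiv (eqv1 e) _ _ fun σ => ?_
  have h : e.symm.trans ((eqv1 e) σ) = σ := by ext i; simp [eqv1]
  rw [h]
  congr 1
  refine (Fintype.prod_equiv e _ _ fun p => ?_).symm
  simp [eqv1]
end

section
variable {d n : ℕ} {k : Fin n → ℕ}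

-- the sign identity
lemma sign_comp_sigma (e : ((j : Fin n) × Fin (k j)) ≃ Fin d)
    (τ : ((j : Fin n) × Fin (k j)) ≃ Fin d) (π : (j : Fin n) → Equiv.Perm (Fin (k j))) :
    Equiv.Perm.sign (e.symm.trans ((Equiv.Perm.sigmaCongrRight π).trans τ))
      = Equiv.Perm.sign (e.symm.trans τ) * ∏ j, Equiv.Perm.sign (π j) := by
  have h : e.symm.trans ((Equiv.Perm.sigmaCongrRight π).trans τ)
      = (e.symm.trans τ) * ((e.symm.trans (Equiv.Perm.sigmaCongrRight π)).trans e) := by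
    rw [Equiv.Perm.mul_def]
    ext i
    simp
  rw [h, map_mul, Equiv.Perm.sign_symm_trans_trans, sign_sigmaCongrRight]

end

section
variable {d n : ℕ} {k : Fin n → ℕ}

lemma grouping (A : Matrix (Fin d) ((j : Fin n) × Fin (k j)) ℝ)
    (e : ((j : Fin n) × Fin (k j)) ≃ Fin d) :
    ((∏ j, (k j).factorial : ℕ) : ℝ) * (A.submatrix id ⇑e.symm).det =
      ∑ τ : ((j : Fin n) × Fin (k j)) ≃ Fin d,
        ((Equiv.Perm.sign (e.symm.trans τ) : ℤ) : ℝ) *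
          ∏ j, (Matrix.of fun a b : Fin (k j) => A (τ ⟨j, a⟩) ⟨j, b⟩).det := by
  classical
  set F : (((j : Fin n) × Fin (k j)) ≃ Fin d) → ℝ := fun τ =>
    ((Equiv.Perm.sign (e.symm.trans τ) : ℤ) : ℝ) * ∏ p, A (τ p) p with hF
  have expand : ∀ τ : ((j : Fin n) × Fin (k j)) ≃ Fin d,
      ((Equiv.Perm.sign (e.symm.trans τ) : ℤ) : ℝ) *
          ∏ j, (Matrix.of fun a b : Fin (k j) => A (τ ⟨j, a⟩) ⟨j, b⟩).det
        = ∑ π : (j : Fin n) → Equiv.Perm (Fin (k j)),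
            F ((Equiv.Perm.sigmaCongrRight π).trans τ) := by
    intro τ
    have step1 : ∀ j, (Matrix.of fun a b : Fin (k j) => A (τ ⟨j, a⟩) ⟨j, b⟩).det
        = ∑ σ : Equiv.Perm (Fin (k j)), ((Equiv.Perm.sign σ : ℤ) : ℝ) *
            ∏ b, A (τ ⟨j, σ b⟩) ⟨j, b⟩ := by
      intro j
      rw [Matrix.det_apply']
      rfl
    simp only [step1]
    rw [Finset.prod_univ_sum, Finset.mul_sum]
    rw [Fintype.piFinset_univ]
    refine Finset.sum_congr rfl fun π _ => ?_
    have hs : ((Equiv.Perm.sign (e.symm.trans ((Equiv.Perm.sigmaCongrRight π).trans τ)) : ℤ) : ℝ)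
        = ((Equiv.Perm.sign (e.symm.trans τ) : ℤ) : ℝ) *
            ∏ j, ((Equiv.Perm.sign (π j) : ℤ) : ℝ) := by
      rw [sign_comp_sigma]
      push_cast
      rfl
    have hp : (∏ p : (j : Fin n) × Fin (k j), A (τ ((Equiv.Perm.sigmaCongrRight π) p)) p)
        = ∏ j, ∏ b, A (τ ⟨j, π j b⟩) ⟨j, b⟩ := by
      rw [← Finset.univ_sigma_univ, Finset.prod_sigma]
      rfl
    rw [hF]
    simp only [Equiv.trans_apply]
    rw [hs, hp, Finset.prod_mul_distrib]
    ring
  symm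
  calc (∑ τ : ((j : Fin n) × Fin (k j)) ≃ Fin d,
        ((Equiv.Perm.sign (e.symm.trans τ) : ℤ) : ℝ) *
          ∏ j, (Matrix.of fun a b : Fin (k j) => A (τ ⟨j, a⟩) ⟨j, b⟩).det)
      = ∑ τ : ((j : Fin n) × Fin (k j)) ≃ Fin d,
          ∑ π : (j : Fin n) → Equiv.Perm (Fin (k j)),
            F ((Equiv.Perm.sigmaCongrRight π).trans τ) := by
        exact Finset.sum_congr rfl fun τ _ => expand τ
    _ = ∑ π : (j : Fin n) → Equiv.Perm (Fin (k j)),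
          ∑ τ : ((j : Fin n) × Fin (k j)) ≃ Fin d,
            F ((Equiv.Perm.sigmaCongrRight π).trans τ) := Finset.sum_comm
    _ = ∑ _π : (j : Fin n) → Equiv.Perm (Fin (k j)),
          ∑ τ : ((j : Fin n) × Fin (k j)) ≃ Fin d, F τ := by
        refine Finset.sum_congr rfl fun π _ => ?_
        exact Fintype.sum_equiv
          ⟨fun τ => (Equiv.Perm.sigmaCongrRight π).trans τ,
           fun τ => ((Equiv.Perm.sigmaCongrRight π).symm : _ ≃ _).trans τ,
           fun τ => by ext p; simp,
           fun τ => by ext p; simp⟩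
          _ _ (fun τ => rfl)
    _ = ((∏ j, (k j).factorial : ℕ) : ℝ) * (A.submatrix id ⇑e.symm).det := by
        rw [Finset.sum_const, det_eq_sum_equivs A e, nsmul_eq_mul]
        congr 2
        simp [Fintype.card_pi, Fintype.card_perm]

end

section
variable {d n : ℕ} {k : Fin n → ℕ}

lemma laplace_bound (A : Matrix (Fin d) ((j : Fin n) × Fin (k j)) ℝ)
    (e : ((j : Fin n) × Fin (k j)) ≃ Fin d) :
    |(A.submatrix id ⇑e.symm).det| ≤
      ∑ τ : ((j : Fin n) × Fin (k j)) ≃ Fin d,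
        ∏ j, |(Matrix.of fun a b : Fin (k j) => A (τ ⟨j, a⟩) ⟨j, b⟩).det| := by
  have hk0 : (0:ℕ) < ∏ j, (k j).factorial := Finset.prod_pos fun j _ => (k j).factorial_pos
  have hk : (1:ℝ) ≤ ((∏ j, (k j).factorial : ℕ) : ℝ) := by exact_mod_cast hk0
  calc |(A.submatrix id ⇑e.symm).det|
      ≤ ((∏ j, (k j).factorial : ℕ) : ℝ) * |(A.submatrix id ⇑e.symm).det| :=
        le_mul_of_one_le_left (abs_nonneg _) hk
    _ = |((∏ j, (k j).factorial : ℕ) : ℝ) * (A.submatrix id ⇑e.symm).det| := by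
        rw [abs_mul, abs_of_nonneg (by positivity : (0:ℝ) ≤ ((∏ j, (k j).factorial : ℕ) : ℝ))]
    _ = |∑ τ : ((j : Fin n) × Fin (k j)) ≃ Fin d,
          ((Equiv.Perm.sign (e.symm.trans τ) : ℤ) : ℝ) *
            ∏ j, (Matrix.of fun a b : Fin (k j) => A (τ ⟨j, a⟩) ⟨j, b⟩).det| := by
        rw [grouping]
    _ ≤ ∑ τ : ((j : Fin n) × Fin (k j)) ≃ Fin d,
          |((Equiv.Perm.sign (e.symm.trans τ) : ℤ) : ℝ) *
            ∏ j, (Matrix.of fun a b : Fin (k j) => A (τ ⟨j, a⟩) ⟨j, b⟩).det| :=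
        Finset.abs_sum_le_sum_abs _ _
    _ = ∑ τ : ((j : Fin n) × Fin (k j)) ≃ Fin d,
          ∏ j, |(Matrix.of fun a b : Fin (k j) => A (τ ⟨j, a⟩) ⟨j, b⟩).det| := by
        refine Finset.sum_congr rfl fun τ _ => ?_
        rw [abs_mul, Finset.abs_prod, abs_unit_intCast, one_mul]

end

end AuxLemmas

theorem stmt_3 (d : ℕ) :
    ∃ C : ℝ, ∀ (n : ℕ) (k : Fin n → ℕ)
      (V : Fin n → Submodule ℝ (EuclideanSpace ℝ (Fin d))),
      (∀ j, Module.finrank ℝ ↥(V j) = k j) → (∑ j, k j = d) →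
      ∀ w : Fin d → EuclideanSpace ℝ (Fin d), Orthonormal ℝ w →
      ∃ idx : ((j : Fin n) × Fin (d - k j)) → Fin d,
        (∀ i : Fin d, (Finset.univ.filter fun p => idx p = i).card = n - 1) ∧
        subspaceWedge V ≤ C * ∏ j, mixedWedge (V j) (fun h : Fin (d - k j) => w (idx ⟨j, h⟩)) := by
  classical
  refine ⟨(d.factorial : ℝ), ?_⟩
  intro n k V hV hsum w hw
  obtain rfl : k = fun j => Module.finrank ℝ ↥(V j) := funext fun j => (hV j).symm
  simp only at hsum ⊢
  -- basic data
  have hkd : ∀ j, Module.finrank ℝ ↥(V j) ≤ d := fun j =>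
    le_of_le_of_eq (Finset.single_le_sum (f := fun j => Module.finrank ℝ ↥(V j))
      (fun _ _ => Nat.zero_le _) (Finset.mem_univ j)) hsum
  have hcard : Fintype.card ((j : Fin n) × Fin (Module.finrank ℝ ↥(V j))) = d := by
    simp [Fintype.card_sigma, hsum]
  set e := Fintype.equivFinOfCardEq hcard with he
  set b : ((j : Fin n) × Fin (Module.finrank ℝ ↥(V j))) → EuclideanSpace ℝ (Fin d) :=
    fun p => ((stdOrthonormalBasis ℝ ↥(V p.1)) p.2 : EuclideanSpace ℝ (Fin d)) with hb
  set B : Matrix (Fin d) ((j : Fin n) × Fin (Module.finrank ℝ ↥(V j))) ℝ :=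
    Matrix.of fun r p => b p r with hB
  set W : Matrix (Fin d) (Fin d) ℝ := Matrix.of fun r i => w i r with hWdef
  set A := W.transpose * B with hA
  -- orthonormality of w in coordinates
  have horth : ∀ i i', (∑ r, w i r * w i' r) = if i = i' then 1 else 0 := by
    intro i i'
    have := (orthonormal_iff_ite (𝕜 := ℝ)).mp hw i i'
    simpa [PiLp.inner_apply, RCLike.inner_apply, conj_trivial, mul_comm] using this
  have hW1 : W.transpose * W = 1 := by
    ext i i'
    simp only [Matrix.mul_apply, Matrix.transpose_apply, Matrix.one_apply, hWdef, Matrix.of_apply]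
    exact horth i i'
  have habsW : |W.det| = 1 := by
    have h2 : W.det * W.det = 1 := by
      have := congrArg Matrix.det hW1
      rwa [Matrix.det_mul, Matrix.det_transpose, Matrix.det_one] at this
    rcases mul_self_eq_one_iff.mp h2 with h | h <;> rw [h] <;> norm_num
  -- subspaceWedge in terms of A
  have hsubs : subspaceWedge V = |(A.submatrix id ⇑e.symm).det| := by
    have h1 : subspaceWedge V = |(B.submatrix id ⇑e.symm).det| := by
      simp only [subspaceWedge, absDet]
      rw [dif_pos hcard]
      rfl
    have hAB : A.submatrix id ⇑e.symm = W.transpose * (B.submatrix id ⇑e.symm) := by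
      ext i i'
      simp [hA, Matrix.mul_apply]
    rw [h1, hAB, Matrix.det_mul, abs_mul, Matrix.det_transpose, habsW, one_mul]
  -- apply the Laplace-type bound and pick a maximizing τ₀
  have hlb := laplace_bound A e
  obtain ⟨τ₀, -, hτ₀⟩ := Finset.exists_max_image Finset.univ
    (fun τ : ((j : Fin n) × Fin (Module.finrank ℝ ↥(V j))) ≃ Fin d =>
      ∏ j, |(Matrix.of fun a b' : Fin (Module.finrank ℝ ↥(V j)) =>
        A (τ ⟨j, a⟩) ⟨j, b'⟩).det|) ⟨e, Finset.mem_univ e⟩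
  have hsum_le : (∑ τ : ((j : Fin n) × Fin (Module.finrank ℝ ↥(V j))) ≃ Fin d,
        ∏ j, |(Matrix.of fun a b' : Fin (Module.finrank ℝ ↥(V j)) =>
          A (τ ⟨j, a⟩) ⟨j, b'⟩).det|)
      ≤ (d.factorial : ℝ) * ∏ j, |(Matrix.of fun a b' : Fin (Module.finrank ℝ ↥(V j)) =>
          A (τ₀ ⟨j, a⟩) ⟨j, b'⟩).det| := by
    calc (∑ τ : ((j : Fin n) × Fin (Module.finrank ℝ ↥(V j))) ≃ Fin d,
        ∏ j, |(Matrix.of fun a b' : Fin (Module.finrank ℝ ↥(V j)) =>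
          A (τ ⟨j, a⟩) ⟨j, b'⟩).det|)
        ≤ (Finset.univ : Finset (((j : Fin n) × Fin (Module.finrank ℝ ↥(V j))) ≃ Fin d)).card
            • ∏ j, |(Matrix.of fun a b' : Fin (Module.finrank ℝ ↥(V j)) =>
              A (τ₀ ⟨j, a⟩) ⟨j, b'⟩).det| :=
          Finset.sum_le_card_nsmul _ _ _ (fun τ _ => hτ₀ τ (Finset.mem_univ τ))
      _ = (d.factorial : ℝ) * ∏ j, |(Matrix.of fun a b' : Fin (Module.finrank ℝ ↥(V j)) =>
            A (τ₀ ⟨j, a⟩) ⟨j, b'⟩).det| := by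
          rw [Finset.card_univ, Fintype.card_equiv e, hcard, nsmul_eq_mul]
  -- the sets S j and the enumerations of their complements
  set S : Fin n → Finset (Fin d) := fun j =>
    Finset.univ.image fun a : Fin (Module.finrank ℝ ↥(V j)) => τ₀ ⟨j, a⟩ with hSdef
  have hinj : ∀ j, Function.Injective
      (fun a : Fin (Module.finrank ℝ ↥(V j)) => τ₀ ⟨j, a⟩) := fun j a a' haa =>
    eq_of_heq (Sigma.mk.inj_iff.mp (τ₀.injective haa)).2
  have hScard : ∀ j, (S j).card = Module.finrank ℝ ↥(V j) := fun j => by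
    rw [hSdef]
    rw [Finset.card_image_of_injective _ (hinj j), Finset.card_univ, Fintype.card_fin]
  have hCcard : ∀ j, ((S j)ᶜ).card = d - Module.finrank ℝ ↥(V j) := fun j => by
    rw [Finset.card_compl, hScard j, Fintype.card_fin]
  set c : (j : Fin n) → Fin (d - Module.finrank ℝ ↥(V j)) → Fin d := fun j h =>
    (((S j)ᶜ).orderIsoOfFin (hCcard j) h : Fin d) with hcdef
  have hc_mem : ∀ j h, c j h ∈ (S j)ᶜ := fun j h => (((S j)ᶜ).orderIsoOfFin (hCcard j) h).2
  have hc_inj : ∀ j, Function.Injective (c j) := fun j a a' haa => by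
    have := (((S j)ᶜ).orderIsoOfFin (hCcard j)).injective (Subtype.ext haa)
    exact this
  have hc_surj : ∀ j, ∀ i ∈ (S j)ᶜ, ∃ h, c j h = i := fun j i hi =>
    ⟨(((S j)ᶜ).orderIsoOfFin (hCcard j)).symm ⟨i, hi⟩,
      congrArg Subtype.val ((((S j)ᶜ).orderIsoOfFin (hCcard j)).apply_symm_apply ⟨i, hi⟩)⟩
  refine ⟨fun p => c p.1 p.2, ?_, ?_⟩
  · -- counting
    intro i
    have hiS : ∀ jj, i ∈ S jj ↔ jj = (τ₀.symm i).1 := by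
      intro jj
      constructor
      · intro hmem
        obtain ⟨a, -, ha⟩ := Finset.mem_image.mp hmem
        have : τ₀.symm i = ⟨jj, a⟩ := by rw [← ha, Equiv.symm_apply_apply]
        rw [this]
      · rintro rfl
        refine Finset.mem_image.mpr ⟨(τ₀.symm i).2, Finset.mem_univ _, ?_⟩
        rw [Sigma.eta, Equiv.apply_symm_apply]
    calc (Finset.univ.filter fun p : (j : Fin n) × Fin (d - Module.finrank ℝ ↥(V j)) =>
            c p.1 p.2 = i).card
        = ∑ p : (j : Fin n) × Fin (d - Module.finrank ℝ ↥(V j)),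
            if c p.1 p.2 = i then 1 else 0 := Finset.card_filter _ _
      _ = ∑ j, ∑ h, if c j h = i then 1 else 0 := by
          rw [← Finset.univ_sigma_univ, Finset.sum_sigma]
      _ = ∑ j, if i ∈ (S j)ᶜ then 1 else 0 := by
          refine Finset.sum_congr rfl fun j _ => ?_
          by_cases him : i ∈ (S j)ᶜ
          · rw [if_pos him]
            obtain ⟨h₀, hh₀⟩ := hc_surj j i him
            have hiff : ∀ h, (c j h = i) ↔ (h = h₀) := fun h =>
              ⟨fun hch => hc_inj j (hch.trans hh₀.symm), fun hh => hh ▸ hh₀⟩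
            rw [Finset.sum_congr rfl fun h _ => if_congr (hiff h) rfl rfl,
              Finset.sum_ite_eq' Finset.univ h₀ (fun _ => (1 : ℕ))]
            simp
          · rw [if_neg him]
            refine Finset.sum_eq_zero fun h _ => ?_
            rw [if_neg]
            intro hch
            exact him (hch ▸ hc_mem j h)
      _ = ∑ j, if j = (τ₀.symm i).1 then 0 else 1 := by
          refine Finset.sum_congr rfl fun j _ => ?_
          by_cases hjj : j = (τ₀.symm i).1
          · have hmem : i ∈ S j := (hiS j).mpr hjj
            rw [if_pos hjj, if_neg (by simpa using hmem)]
          · have hmem : i ∉ S j := fun hmem => hjj ((hiS j).mp hmem)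
            rw [if_neg hjj, if_pos (Finset.mem_compl.mpr hmem)]
      _ = n - 1 := by
          rw [← Finset.add_sum_erase _ _ (Finset.mem_univ (τ₀.symm i).1), if_pos rfl, zero_add]
          rw [Finset.sum_congr rfl (fun j hj => if_neg (Finset.ne_of_mem_erase hj))]
          rw [Finset.sum_const, smul_eq_mul, mul_one, Finset.card_erase_of_mem (Finset.mem_univ _),
            Finset.card_univ, Fintype.card_fin]
  · -- the inequality
    have hmemS : ∀ j (a : Fin (Module.finrank ℝ ↥(V j))), τ₀ ⟨j, a⟩ ∈ S j := fun j a =>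
      Finset.mem_image.mpr ⟨a, Finset.mem_univ a, rfl⟩
    have hmw : ∀ j, mixedWedge (V j) (fun h => w (c j h)) =
        |(Matrix.of fun a b' : Fin (Module.finrank ℝ ↥(V j)) =>
          A (τ₀ ⟨j, a⟩) ⟨j, b'⟩).det| := by
      intro j
      have hj : Module.finrank ℝ ↥(V j) + (d - Module.finrank ℝ ↥(V j)) = d :=
        Nat.add_sub_cancel' (hkd j)
      simp only [mixedWedge, absDet]
      rw [dif_pos hj]
      set E : Fin (Module.finrank ℝ ↥(V j)) ⊕ Fin (d - Module.finrank ℝ ↥(V j)) ≃ Fin d :=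
        finSumFinEquiv.trans (finCongr hj) with hE
      set G : Matrix (Fin d) (Fin d) ℝ := Matrix.of fun i i' =>
        Sum.elim (fun l => ((stdOrthonormalBasis ℝ ↥(V j)) l : EuclideanSpace ℝ (Fin d)))
          (fun h => w (c j h)) (E.symm i') i with hG
      show |G.det| = _
      have hbij : Function.Bijective
          (Sum.elim (fun a : Fin (Module.finrank ℝ ↥(V j)) => τ₀ ⟨j, a⟩) (c j)) := by
        constructor
        · rintro (a | h) (a' | h') hst <;> simp only [Sum.elim_inl, Sum.elim_inr] at hst
          · exact congrArg Sum.inl (hinj j hst)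
          · exfalso
            have hmm := hc_mem j h'
            rw [← hst] at hmm
            exact Finset.mem_compl.mp hmm (hmemS j a)
          · exfalso
            have hmm := hc_mem j h
            rw [hst] at hmm
            exact Finset.mem_compl.mp hmm (hmemS j a')
          · exact congrArg Sum.inr (hc_inj j hst)
        · intro i
          by_cases hi : i ∈ S j
          · obtain ⟨a, -, ha⟩ := Finset.mem_image.mp hi
            exact ⟨Sum.inl a, ha⟩
          · obtain ⟨h, hh⟩ := hc_surj j i (Finset.mem_compl.mpr hi)
            exact ⟨Sum.inr h, hh⟩
      set f : (Fin (Module.finrank ℝ ↥(V j)) ⊕ Fin (d - Module.finrank ℝ ↥(V j))) ≃ Fin d :=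
        Equiv.ofBijective _ hbij with hf
      set K := W.transpose * G with hK
      have hGK : |G.det| = |K.det| := by
        rw [hK, Matrix.det_mul, Matrix.det_transpose, abs_mul, habsW, one_mul]
      have h2 : |K.det| = |(K.submatrix ⇑f ⇑E).det| :=
        (Matrix.abs_det_submatrix_equiv_equiv f E K).symm
      have hKe : ∀ (i : Fin d) t, K i (E t) =
          Sum.elim (fun a' => A i ⟨j, a'⟩) (fun h' => if i = c j h' then 1 else 0) t := by
        intro i t
        rcases t with a' | h'
        · simp only [hK, Matrix.mul_apply, hG, Matrix.of_apply, Equiv.symm_apply_apply,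
            Sum.elim_inl, hA, Matrix.transpose_apply, hB, hb, hWdef]
        · simp only [hK, Matrix.mul_apply, hG, Matrix.of_apply, Equiv.symm_apply_apply,
            Sum.elim_inr, Matrix.transpose_apply, hWdef]
          exact horth i (c j h')
      have hblocks : K.submatrix ⇑f ⇑E = Matrix.fromBlocks
          (Matrix.of fun a b' : Fin (Module.finrank ℝ ↥(V j)) => A (τ₀ ⟨j, a⟩) ⟨j, b'⟩) 0
          (Matrix.of fun h a => A (c j h) ⟨j, a⟩) 1 := by
        ext s t
        rcases s with a | h <;> rcases t with a' | h' <;>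
          simp only [Matrix.submatrix_apply, hf, Equiv.ofBijective_apply, Sum.elim_inl,
            Sum.elim_inr, hKe, Matrix.fromBlocks_apply₁₁, Matrix.fromBlocks_apply₁₂,
            Matrix.fromBlocks_apply₂₁, Matrix.fromBlocks_apply₂₂, Matrix.of_apply,
            Matrix.zero_apply, Matrix.one_apply]
        · have hne : τ₀ ⟨j, a⟩ ≠ c j h' := by
            intro hEq
            have hmm := hc_mem j h'
            rw [← hEq] at hmm
            exact Finset.mem_compl.mp hmm (hmemS j a)
          rw [if_neg hne]
        · exact if_congr ⟨fun x => hc_inj j x, fun x => x ▸ rfl⟩ rfl rfl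
      rw [hGK, h2, hblocks, Matrix.det_fromBlocks_zero₁₂, Matrix.det_one, mul_one]
    rw [hsubs]
    refine le_trans hlb (le_trans hsum_le (le_of_eq ?_))
    congr 1
    exact Finset.prod_congr rfl fun j _ => (hmw j).symm
end

section
/- Let V_1, …, V_n be linear subspaces of ℝ^d with k_j = dim V_j and k_1 + ⋯ + k_n = d. Then for any vectors w_1, …, w_d ∈ ℝ^d, there is a constant c_d > 0 depending only on d such that max ∏_{j=1}^n |V_j ∧ w_{i_{j,k_j+1}} ∧ ⋯ ∧ w_{i_{j,d}}| ≥ c_d · |V_1 ∧ ⋯ ∧ V_n| · |det(w_1, …, w_d)|^{n−1}, where the maximum is taken over all families of indices (i_{j,h})_{1 ≤ j ≤ n, k_j+1 ≤ h ≤ d} with values in {1, …, d} such that each index value i ∈ {1, …, d} occurs exactly n − 1 times among all the i_{j,h}, and det(w_1, …, w_d) is the determinant of the matrix with columns w_1, …, w_d. -/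
open MeasureTheory
open scoped RealInnerProductSpace ENNReal

open Finset Equiv

namespace Stmt4Aux

lemma card_sigma_fiber {n : ℕ} (m : Fin n → ℕ) (j₀ : Fin n) :
    ((univ : Finset ((j : Fin n) × Fin (m j))).filter fun p => p.1 = j₀).card = m j₀ := by
  rw [← Fintype.card_fin (m j₀), ← Finset.card_univ]
  apply Finset.card_bij
    (fun (p : (j : Fin n) × Fin (m j)) hp =>
      Fin.cast (congrArg m (Finset.mem_filter.mp hp).2) p.2)
  · intro a ha; exact Finset.mem_univ _
  · rintro ⟨j, l⟩ ha ⟨j', l'⟩ ha' h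
    have hj : j = j₀ := (Finset.mem_filter.mp ha).2
    have hj' : j' = j₀ := (Finset.mem_filter.mp ha').2
    subst hj; subst hj'
    simpa using h
  · intro l _
    refine ⟨⟨j₀, l⟩, by simp, rfl⟩

lemma card_filter_equiv {α β : Type*} [Fintype α] [Fintype β] [DecidableEq α] [DecidableEq β]
    (e : α ≃ β) (P : α → Prop) [DecidablePred P] :
    ((univ : Finset β).filter fun i => P (e.symm i)).card = ((univ : Finset α).filter P).card := by
  apply Finset.card_bij (fun i _ => e.symm i)
  · intro a ha; simp only [Finset.mem_filter, Finset.mem_univ, true_and] at ha ⊢; exact ha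
  · intro a _ b _ h; exact e.symm.injective h
  · intro a ha
    exact ⟨e a, by simpa using (Finset.mem_filter.mp ha).2, by simp⟩

lemma card_filter_sigma {n : ℕ} {G : Fin n → Type*} [∀ j, Fintype (G j)] [∀ j, DecidableEq (G j)]
    (P : ((j : Fin n) × G j) → Prop) [DecidablePred P] :
    ((univ : Finset ((j : Fin n) × G j)).filter P).card
      = ∑ j, ((univ : Finset (G j)).filter fun x => P ⟨j, x⟩).card := by
  rw [← Finset.card_sigma]
  congr 1
  ext ⟨j, x⟩
  simp [Finset.mem_sigma]


/-- restriction of a fiber-preserving permutation to the fiber of `j`. -/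
def nu {d n : ℕ} (τ : Fin d → Fin n) (j : Fin n) (π : Perm (Fin d))
    (hπ : ∀ i, τ (π i) = τ i) : Perm (Fin d) where
  toFun i := if τ i = j then π i else i
  invFun i := if τ i = j then π.symm i else i
  left_inv i := by
    by_cases h : τ i = j
    · simp only [h, if_pos, hπ, if_true]
      simp [h]
    · simp [h]
  right_inv i := by
    have hπ' : ∀ i, τ (π.symm i) = τ i := by
      intro i; conv_rhs => rw [← π.apply_symm_apply i]
      rw [hπ]
    by_cases h : τ i = j
    · simp only [h, if_pos]
      simp [hπ', h]
    · simp [h]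

lemma nu_apply {d n : ℕ} (τ : Fin d → Fin n) (j : Fin n) (π : Perm (Fin d))
    (hπ : ∀ i, τ (π i) = τ i) (i : Fin d) :
    nu τ j π hπ i = if τ i = j then π i else i := rfl

lemma sign_eq_prod_nu_aux {d n : ℕ} (τ : Fin d → Fin n) (s : Finset (Fin n)) :
    ∀ (π : Perm (Fin d)) (hπ : ∀ i, τ (π i) = τ i), (∀ i, τ i ∉ s → π i = i) →
      Perm.sign π = ∏ j ∈ s, Perm.sign (nu τ j π hπ) := by
  induction s using Finset.induction_on with
  | empty =>
    intro π hπ hid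
    have hπ1 : π = 1 := by
      apply Equiv.ext; intro i; exact hid i (by simp)
    simp [hπ1]
  | @insert a s ha ih =>
    intro π hπ hid
    set π' : Perm (Fin d) :=
      { toFun := fun i => if τ i = a then i else π i
        invFun := fun i => if τ i = a then i else π.symm i
        left_inv := by
          intro i
          by_cases h : τ i = a
          · simp [h]
          · simp only [h, if_neg, if_false]
            rw [if_neg (by rw [hπ]; exact h)]
            simp
        right_inv := by
          have hπ' : ∀ i, τ (π.symm i) = τ i := by
            intro i; conv_rhs => rw [← π.apply_symm_apply i]; rw [hπ]
          intro i
          by_cases h : τ i = a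
          · simp [h]
          · simp only [h, if_neg, if_false]
            rw [if_neg (by rw [hπ']; exact h)]
            simp } with hπ'def
    have hπ'app : ∀ i, π' i = if τ i = a then i else π i := fun _ => rfl
    have hπ'fib : ∀ i, τ (π' i) = τ i := by
      intro i
      rw [hπ'app]
      by_cases h : τ i = a
      · simp [h]
      · simp [h, hπ]
    have hπ'id : ∀ i, τ i ∉ s → π' i = i := by
      intro i hi
      rw [hπ'app]
      by_cases h : τ i = a
      · simp [h]
      · rw [if_neg h]
        exact hid i (by simp [h, hi])
    have hdec : π = nu τ a π hπ * π' := by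
      apply Equiv.ext; intro i
      show π i = nu τ a π hπ (π' i)
      rw [hπ'app]
      by_cases h : τ i = a
      · simp [h, nu_apply]
      · rw [if_neg h, nu_apply, if_neg (by rw [hπ]; exact h)]
    have hnus : ∀ j ∈ s, nu τ j π' hπ'fib = nu τ j π hπ := by
      intro j hj
      have hja : j ≠ a := by rintro rfl; exact ha hj
      apply Equiv.ext; intro i
      rw [nu_apply, nu_apply]
      by_cases h : τ i = j
      · rw [if_pos h, if_pos h, hπ'app, if_neg (by rw [h]; exact hja)]
      · rw [if_neg h, if_neg h]
    have hsign := congrArg Perm.sign hdec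
    rw [Perm.sign_mul] at hsign
    rw [Finset.prod_insert ha, hsign, ih π' hπ'fib hπ'id]
    congr 1
    exact Finset.prod_congr rfl fun j hj => by rw [hnus j hj]

lemma sign_eq_prod_nu {d n : ℕ} (τ : Fin d → Fin n) (π : Perm (Fin d))
    (hπ : ∀ i, τ (π i) = τ i) :
    Perm.sign π = ∏ j, Perm.sign (nu τ j π hπ) :=
  sign_eq_prod_nu_aux τ univ π hπ (fun i hi => absurd (mem_univ _) hi)


variable {d n : ℕ} {k : Fin n → ℕ}

/-- the fiber of `τ` over `j`, as a finset -/
def fib {d n : ℕ} (τ : Fin d → Fin n) (j : Fin n) : Finset (Fin d) :=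
  univ.filter fun i => τ i = j

lemma mem_fib {τ : Fin d → Fin n} {j : Fin n} {i : Fin d} : i ∈ fib τ j ↔ τ i = j := by
  simp [fib]

def ee (h : ∀ j, k j ≤ d) (j : Fin n) : (Fin (k j) ⊕ Fin (d - k j)) ≃ Fin d :=
  finSumFinEquiv.trans (finCongr (Nat.add_sub_cancel' (h j)))

section tau

variable (τ : Fin d → Fin n) (hτ : ∀ j, (fib τ j).card = k j)
include hτ

lemma card_fib_compl (j : Fin n) : ((fib τ j)ᶜ).card = d - k j := by
  rw [Finset.card_compl, hτ, Fintype.card_fin]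

/-- enumeration of the complement of the fiber of `j` -/
def enum (j : Fin n) (m : Fin (d - k j)) : Fin d :=
  ((fib τ j)ᶜ.orderIsoOfFin (card_fib_compl τ hτ j) m : Fin d)

lemma enum_not_mem (j : Fin n) (m : Fin (d - k j)) : τ (enum τ hτ j m) ≠ j := by
  have := ((fib τ j)ᶜ.orderIsoOfFin (card_fib_compl τ hτ j) m).2
  rw [Finset.mem_compl] at this
  intro hc
  exact this (mem_fib.mpr hc)

lemma enum_inj (j : Fin n) : Function.Injective (enum τ hτ j) := by
  intro m m' hmm
  have := ((fib τ j)ᶜ.orderIsoOfFin (card_fib_compl τ hτ j)).injective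
    (Subtype.ext hmm)
  exact this

lemma enum_surj (j : Fin n) (i : Fin d) (hi : τ i ≠ j) : ∃ m, enum τ hτ j m = i := by
  have hmem : i ∈ (fib τ j)ᶜ := Finset.mem_compl.mpr (fun hc => hi (mem_fib.mp hc))
  refine ⟨((fib τ j)ᶜ.orderIsoOfFin (card_fib_compl τ hτ j)).symm ⟨i, hmem⟩, ?_⟩
  unfold enum
  rw [OrderIso.apply_symm_apply]

/-- enumeration of the fiber of `j` -/
def fibEnum (j : Fin n) (l : Fin (k j)) : Fin d :=
  ((fib τ j).orderIsoOfFin (hτ j) l : Fin d)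

lemma fibEnum_mem (j : Fin n) (l : Fin (k j)) : τ (fibEnum τ hτ j l) = j :=
  mem_fib.mp ((fib τ j).orderIsoOfFin (hτ j) l).2

lemma fibEnum_sigma_inj :
    Function.Injective (fun p : ((j : Fin n) × Fin (k j)) => fibEnum τ hτ p.1 p.2) := by
  rintro ⟨j, l⟩ ⟨j', l'⟩ hp
  simp only at hp
  have hj : j = j' := by
    rw [← fibEnum_mem τ hτ j l, hp, fibEnum_mem τ hτ j' l']
  subst hj
  have : l = l' := ((fib τ j).orderIsoOfFin (hτ j)).injective (Subtype.ext hp)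
  rw [this]

/-- the count property of the enumerations of fiber complements -/
lemma count_enum (i : Fin d) :
    ((univ : Finset ((j : Fin n) × Fin (d - k j))).filter
      fun p => enum τ hτ p.1 p.2 = i).card = n - 1 := by
  rw [card_filter_sigma (fun p : (j : Fin n) × Fin (d - k j) => enum τ hτ p.1 p.2 = i)]
  have hcard : ∀ j, ((univ : Finset (Fin (d - k j))).filter fun m => enum τ hτ j m = i).card
      = if τ i = j then 0 else 1 := by
    intro j
    by_cases h : τ i = j
    · rw [if_pos h, Finset.card_eq_zero, Finset.filter_eq_empty_iff]
      intro m _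
      intro hc
      exact enum_not_mem τ hτ j m (by rw [hc, h])
    · rw [if_neg h]
      obtain ⟨m₀, hm₀⟩ := enum_surj τ hτ j i h
      rw [Finset.card_eq_one]
      refine ⟨m₀, ?_⟩
      ext m
      simp only [Finset.mem_filter, Finset.mem_univ, true_and, Finset.mem_singleton]
      constructor
      · intro hm; exact enum_inj τ hτ j (by rw [hm, hm₀])
      · rintro rfl; exact hm₀
  calc ∑ j, ((univ : Finset (Fin (d - k j))).filter fun m => enum τ hτ j m = i).card
      = ∑ j, if τ i = j then 0 else 1 := by
        exact Finset.sum_congr rfl fun j _ => hcard j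
    _ = n - 1 := by
        have h1 : (∑ j, if τ i = j then 0 else 1) + (∑ j : Fin n, if τ i = j then 1 else 0)
            = ∑ j : Fin n, 1 := by
          rw [← Finset.sum_add_distrib]
          apply Finset.sum_congr rfl
          intro j _
          by_cases h : τ i = j <;> simp [h]
        have h2 : (∑ j : Fin n, if τ i = j then 1 else 0) = 1 := by
          simp only [eq_comm (a := τ i)]
          rw [Finset.sum_ite_eq' univ (τ i) (fun _ => 1)]
          simp
        rw [h2] at h1
        simp only [Finset.sum_const, smul_eq_mul, mul_one, Finset.card_univ,
          Fintype.card_fin] at h1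
        omega

end tau


section perms

variable (h : ∀ j, k j ≤ d) (e : ((j : Fin n) × Fin (k j)) ≃ Fin d)

/-- the set of permutations matched to the block pattern -/
def Afin (τ : Fin d → Fin n) : Finset (Perm (Fin d)) :=
  univ.filter fun σ => ∀ q, τ (σ q) = (e.symm q).1

lemma mem_Afin {τ : Fin d → Fin n} {σ : Perm (Fin d)} :
    σ ∈ Afin e τ ↔ ∀ q, τ (σ q) = (e.symm q).1 := by
  simp [Afin]

variable (τ : Fin d → Fin n) (hτ : ∀ j, (fib τ j).card = k j)

/-- the per-block permutation of a matched permutation -/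
def cfun (σ : Perm (Fin d)) (j : Fin n) : Fin d → Fin d :=
  fun colI => Sum.elim (fun l => σ (e ⟨j, l⟩)) (enum τ hτ j) ((ee h j).symm colI)

include hτ

lemma cfun_inj {σ : Perm (Fin d)} (hσ : ∀ q, τ (σ q) = (e.symm q).1) (j : Fin n) :
    Function.Injective (cfun h e τ hτ σ j) := by
  have hg : Function.Injective
      (Sum.elim (fun l => σ (e ⟨j, l⟩)) (enum τ hτ j) :
        Fin (k j) ⊕ Fin (d - k j) → Fin d) := by
    rintro (l | m) (l' | m') hx
    · simp only [Sum.elim_inl] at hx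
      have := e.injective (σ.injective hx)
      rw [Sigma.mk.inj_iff] at this
      rw [eq_of_heq this.2]
    · exfalso
      simp only [Sum.elim_inl, Sum.elim_inr] at hx
      have h1 : τ (σ (e ⟨j, l⟩)) = j := by rw [hσ, Equiv.symm_apply_apply]
      rw [hx] at h1
      exact enum_not_mem τ hτ j m' h1
    · exfalso
      simp only [Sum.elim_inl, Sum.elim_inr] at hx
      have h1 : τ (σ (e ⟨j, l'⟩)) = j := by rw [hσ, Equiv.symm_apply_apply]
      rw [← hx] at h1
      exact enum_not_mem τ hτ j m h1
    · simp only [Sum.elim_inr] at hx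
      rw [enum_inj τ hτ j hx]
  intro c c' hc
  exact (ee h j).symm.injective (hg hc)

/-- the per-block permutation, as a permutation -/
noncomputable def cperm (σ : Perm (Fin d)) (hσ : ∀ q, τ (σ q) = (e.symm q).1) (j : Fin n) :
    Perm (Fin d) :=
  Equiv.ofBijective (cfun h e τ hτ σ j)
    ((Finite.injective_iff_bijective).mp (cfun_inj h e τ hτ hσ j))

lemma cperm_inl (σ : Perm (Fin d)) (hσ : ∀ q, τ (σ q) = (e.symm q).1) (j : Fin n)
    (l : Fin (k j)) :
    cperm h e τ hτ σ hσ j (ee h j (Sum.inl l)) = σ (e ⟨j, l⟩) := by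
  show cfun h e τ hτ σ j (ee h j (Sum.inl l)) = _
  unfold cfun
  rw [Equiv.symm_apply_apply]
  rfl

lemma cperm_inr (σ : Perm (Fin d)) (hσ : ∀ q, τ (σ q) = (e.symm q).1) (j : Fin n)
    (m : Fin (d - k j)) :
    cperm h e τ hτ σ hσ j (ee h j (Sum.inr m)) = enum τ hτ j m := by
  show cfun h e τ hτ σ j (ee h j (Sum.inr m)) = _
  unfold cfun
  rw [Equiv.symm_apply_apply]
  rfl

/-- assembling a tuple of per-block permutations into a function on the sigma type -/
lemma psig_fib {p : (j : Fin n) → Perm (Fin d)}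
    (hp : ∀ j m, p j (ee h j (Sum.inr m)) = enum τ hτ j m) (q : (j : Fin n) × Fin (k j)) :
    τ (p q.1 (ee h q.1 (Sum.inl q.2))) = q.1 := by
  obtain ⟨j, l⟩ := q
  by_contra hne
  obtain ⟨m, hm⟩ := enum_surj τ hτ j _ hne
  rw [← hp j m] at hm
  have := (ee h j).injective ((p j).injective hm)
  exact Sum.inr_ne_inl this

lemma psig_inj {p : (j : Fin n) → Perm (Fin d)}
    (hp : ∀ j m, p j (ee h j (Sum.inr m)) = enum τ hτ j m) :
    Function.Injective (fun q : ((j : Fin n) × Fin (k j)) => p q.1 (ee h q.1 (Sum.inl q.2))) := by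
  rintro ⟨j, l⟩ ⟨j', l'⟩ hq
  simp only at hq
  have hj : j = j' := by
    have h1 := psig_fib h τ hτ hp ⟨j, l⟩
    have h2 := psig_fib h τ hτ hp ⟨j', l'⟩
    simp only at h1 h2
    rw [← h1, ← h2]
    exact congrArg τ hq
  subst hj
  have h1 := (ee h j).injective ((p j).injective hq)
  rw [Sum.inl.inj_iff] at h1
  rw [h1]

/-- assembling a tuple of per-block permutations into a permutation -/
noncomputable def psi (p : (j : Fin n) → Perm (Fin d))
    (hp : ∀ j m, p j (ee h j (Sum.inr m)) = enum τ hτ j m) : Perm (Fin d) :=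
  Equiv.ofBijective (fun i => p (e.symm i).1 (ee h (e.symm i).1 (Sum.inl (e.symm i).2)))
    ((Finite.injective_iff_bijective).mp
      ((psig_inj h τ hτ hp).comp e.symm.injective))

lemma psi_apply (p : (j : Fin n) → Perm (Fin d))
    (hp : ∀ j m, p j (ee h j (Sum.inr m)) = enum τ hτ j m) (j : Fin n) (l : Fin (k j)) :
    psi h e τ hτ p hp (e ⟨j, l⟩) = p j (ee h j (Sum.inl l)) := by
  show p (e.symm (e ⟨j, l⟩)).1 (ee h (e.symm (e ⟨j, l⟩)).1 (Sum.inl (e.symm (e ⟨j, l⟩)).2)) = _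
  rw [Equiv.symm_apply_apply]

lemma psi_mem (p : (j : Fin n) → Perm (Fin d))
    (hp : ∀ j m, p j (ee h j (Sum.inr m)) = enum τ hτ j m) (q : Fin d) :
    τ (psi h e τ hτ p hp q) = (e.symm q).1 :=
  psig_fib h τ hτ hp (e.symm q)

lemma psi_cperm (σ : Perm (Fin d)) (hσ : ∀ q, τ (σ q) = (e.symm q).1)
    (hp : ∀ j m, cperm h e τ hτ σ hσ j (ee h j (Sum.inr m)) = enum τ hτ j m) :
    psi h e τ hτ (fun j => cperm h e τ hτ σ hσ j) hp = σ := by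
  apply Equiv.ext
  intro q
  obtain ⟨⟨j, l⟩, rfl⟩ := e.surjective q
  rw [psi_apply, cperm_inl]

lemma cperm_psi (p : (j : Fin n) → Perm (Fin d))
    (hp : ∀ j m, p j (ee h j (Sum.inr m)) = enum τ hτ j m)
    (hσ : ∀ q, τ (psi h e τ hτ p hp q) = (e.symm q).1) (j : Fin n) :
    cperm h e τ hτ (psi h e τ hτ p hp) hσ j = p j := by
  apply Equiv.ext
  intro colI
  obtain ⟨x, rfl⟩ := (ee h j).surjective colI
  cases x with
  | inl l => rw [cperm_inl, psi_apply]
  | inr m => rw [cperm_inr, hp]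

/-- the canonical matched permutation of a `τ` with fibers of the right sizes -/
noncomputable def rho : Perm (Fin d) :=
  Equiv.ofBijective (fun q => fibEnum τ hτ (e.symm q).1 (e.symm q).2)
    ((Finite.injective_iff_bijective).mp
      ((fibEnum_sigma_inj τ hτ).comp e.symm.injective))

lemma rho_fib (q : Fin d) : τ (rho e τ hτ q) = (e.symm q).1 :=
  fibEnum_mem τ hτ _ _

lemma rho_mem_Afin : rho e τ hτ ∈ Afin e τ :=
  (mem_Afin _).mpr (rho_fib e τ hτ)

end perms

section dets

/-- real-valued sign of a permutation -/
noncomputable def sgn {α : Type*} [Fintype α] [DecidableEq α] (σ : Perm α) : ℝ :=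
  ((Perm.sign σ : ℤ) : ℝ)

lemma sgn_mul_self {α : Type*} [Fintype α] [DecidableEq α] (σ : Perm α) :
    sgn σ * sgn σ = 1 := by
  unfold sgn
  rcases Int.units_eq_one_or (Perm.sign σ) with h | h <;> rw [h] <;> norm_num

lemma abs_sgn {α : Type*} [Fintype α] [DecidableEq α] (σ : Perm α) : |sgn σ| = 1 := by
  unfold sgn
  rcases Int.units_eq_one_or (Perm.sign σ) with h | h <;> rw [h] <;> norm_num

variable (h : ∀ j, k j ≤ d) (e : ((j : Fin n) × Fin (k j)) ≃ Fin d)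
  (τ : Fin d → Fin n) (hτ : ∀ j, (fib τ j).card = k j)

/-- permutations compatible with the `j`-th block -/
def Pset (j : Fin n) : Finset (Perm (Fin d)) :=
  univ.filter fun ς => ∀ m, ς (ee h j (Sum.inr m)) = enum τ hτ j m

lemma mem_Pset {j : Fin n} {ς : Perm (Fin d)} :
    ς ∈ Pset h τ hτ j ↔ ∀ m, ς (ee h j (Sum.inr m)) = enum τ hτ j m := by
  simp [Pset]

/-- the coefficient matrix of the `j`-th mixed wedge -/
noncomputable def AcM (C : Matrix (Fin d) (Fin d) ℝ) (j : Fin n) :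
    Matrix (Fin d) (Fin d) ℝ :=
  Matrix.of fun r colI =>
    Sum.elim (fun l => C r (e ⟨j, l⟩)) (fun m => if r = enum τ hτ j m then (1:ℝ) else 0)
      ((ee h j).symm colI)

lemma det_AcM (C : Matrix (Fin d) (Fin d) ℝ) (j : Fin n) :
    (AcM h e τ hτ C j).det
      = ∑ ς ∈ Pset h τ hτ j, sgn ς * ∏ l, C (ς (ee h j (Sum.inl l))) (e ⟨j, l⟩) := by
  rw [Matrix.det_apply']
  rw [← Finset.sum_subset (Finset.subset_univ (Pset h τ hτ j))]
  · apply Finset.sum_congr rfl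
    intro ς hς
    rw [mem_Pset] at hς
    have hprod : ∏ i, AcM h e τ hτ C j (ς i) i
        = ∏ l, C (ς (ee h j (Sum.inl l))) (e ⟨j, l⟩) := by
      rw [← Equiv.prod_comp (ee h j) (fun i => AcM h e τ hτ C j (ς i) i)]
      rw [Fintype.prod_sum_type]
      have h1 : ∀ l, AcM h e τ hτ C j (ς (ee h j (Sum.inl l))) (ee h j (Sum.inl l))
          = C (ς (ee h j (Sum.inl l))) (e ⟨j, l⟩) := by
        intro l
        unfold AcM
        rw [Matrix.of_apply, Equiv.symm_apply_apply, Sum.elim_inl]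
      have h2 : ∀ m, AcM h e τ hτ C j (ς (ee h j (Sum.inr m))) (ee h j (Sum.inr m))
          = 1 := by
        intro m
        unfold AcM
        rw [Matrix.of_apply, Equiv.symm_apply_apply, Sum.elim_inr, if_pos (hς m)]
      rw [Finset.prod_congr rfl fun l _ => h1 l, Finset.prod_congr rfl fun m _ => h2 m]
      simp
    rw [hprod]
    rfl
  · intro ς _ hς
    rw [mem_Pset] at hς
    push_neg at hς
    obtain ⟨m, hm⟩ := hς
    have hzero : AcM h e τ hτ C j (ς (ee h j (Sum.inr m))) (ee h j (Sum.inr m)) = 0 := by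
      unfold AcM
      rw [Matrix.of_apply, Equiv.symm_apply_apply, Sum.elim_inr, if_neg hm]
    have : ∏ i, AcM h e τ hτ C j (ς i) i = 0 :=
      Finset.prod_eq_zero (Finset.mem_univ (ee h j (Sum.inr m))) hzero
    rw [this, mul_zero]

include hτ in
lemma sign_constancy {σ σ' : Perm (Fin d)}
    (hσ : ∀ q, τ (σ q) = (e.symm q).1) (hσ' : ∀ q, τ (σ' q) = (e.symm q).1) :
    Perm.sign σ * ∏ j, Perm.sign (cperm h e τ hτ σ hσ j)
      = Perm.sign σ' * ∏ j, Perm.sign (cperm h e τ hτ σ' hσ' j) := by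
  set π : Perm (Fin d) := σ' * σ⁻¹ with hπdef
  have hπ : ∀ i, τ (π i) = τ i := by
    intro i
    have h1 : τ (σ (σ⁻¹ i)) = (e.symm (σ⁻¹ i)).1 := hσ _
    rw [show σ (σ⁻¹ i) = i from σ.apply_symm_apply i] at h1
    have h2 : τ (σ' (σ⁻¹ i)) = (e.symm (σ⁻¹ i)).1 := hσ' _
    show τ (σ' (σ⁻¹ i)) = τ i
    rw [h2, ← h1]
  have key : ∀ j, cperm h e τ hτ σ' hσ' j = nu τ j π hπ * cperm h e τ hτ σ hσ j := by
    intro j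
    apply Equiv.ext
    intro colI
    obtain ⟨x, rfl⟩ := (ee h j).surjective colI
    cases x with
    | inl l =>
      rw [Perm.mul_apply, cperm_inl, cperm_inl, nu_apply]
      have hfib : τ (σ (e ⟨j, l⟩)) = j := by rw [hσ, Equiv.symm_apply_apply]
      rw [if_pos hfib]
      show σ' (e ⟨j, l⟩) = σ' (σ⁻¹ (σ (e ⟨j, l⟩)))
      rw [show σ⁻¹ (σ (e ⟨j, l⟩)) = e ⟨j, l⟩ from σ.symm_apply_apply _]
    | inr m =>
      rw [Perm.mul_apply, cperm_inr, cperm_inr, nu_apply]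
      rw [if_neg (enum_not_mem τ hτ j m)]
  have hsignπ : Perm.sign π = ∏ j, Perm.sign (nu τ j π hπ) := sign_eq_prod_nu τ π hπ
  have hprod : ∏ j, Perm.sign (cperm h e τ hτ σ' hσ' j)
      = Perm.sign π * ∏ j, Perm.sign (cperm h e τ hτ σ hσ j) := by
    rw [hsignπ, ← Finset.prod_mul_distrib]
    apply Finset.prod_congr rfl
    intro j _
    rw [key j, Perm.sign_mul]
  rw [hprod, hπdef, Perm.sign_mul, Perm.sign_inv]
  generalize Perm.sign σ = u
  generalize Perm.sign σ' = v
  generalize (∏ j, Perm.sign (cperm h e τ hτ σ hσ j)) = P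
  calc u * P = 1 * (u * P) := by rw [one_mul]
    _ = (v * v) * (u * P) := by rw [Int.units_mul_self]
    _ = v * (v * (u * P)) := by rw [mul_assoc]
    _ = v * (v * u * P) := by rw [mul_assoc v u P]

lemma prod_sigma_univ' {n : ℕ} {F : Fin n → Type*} [∀ j, Fintype (F j)] (g : (Σ j, F j) → ℝ) :
    ∏ p : Σ j, F j, g p = ∏ j, ∏ x : F j, g ⟨j, x⟩ := by
  rw [← Finset.univ_sigma_univ, Finset.prod_sigma]

lemma units_cast_eq {u v : ℤˣ} (huv : u = v) : ((u : ℤ) : ℝ) = ((v : ℤ) : ℝ) := by rw [huv]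

lemma sgn_prod_cast {α : Type*} [Fintype α] (f : α → Perm (Fin d)) :
    ((((∏ j, Perm.sign (f j)) : ℤˣ) : ℤ) : ℝ) = ∏ j, sgn (f j) := by
  have := map_prod (Units.coeHom ℤ) (fun j => Perm.sign (f j)) univ
  simp only [Units.coeHom_apply] at this
  rw [this]
  push_cast
  rfl

include hτ in
lemma crux (C : Matrix (Fin d) (Fin d) ℝ) :
    |∏ j, (AcM h e τ hτ C j).det| = |∑ σ ∈ Afin e τ, sgn σ * ∏ q, C (σ q) q| := by
  classical
  -- step 1: expand each determinant and take the product
  have hpi : ∏ j, (AcM h e τ hτ C j).det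
      = ∑ p ∈ Fintype.piFinset (fun j => Pset h τ hτ j),
          ∏ j, (sgn (p j) * ∏ l, C (p j (ee h j (Sum.inl l))) (e ⟨j, l⟩)) := by
    rw [Finset.prod_congr rfl (fun j _ => det_AcM h e τ hτ C j), Finset.prod_univ_sum]
  -- step 2: reindex the sum over tuples by matched permutations
  set Φ : Perm (Fin d) → Fin n → Perm (Fin d) := fun σ j =>
    if hσ : ∀ q, τ (σ q) = (e.symm q).1 then cperm h e τ hτ σ hσ j else 1 with hΦdef
  set Ψ : (Fin n → Perm (Fin d)) → Perm (Fin d) := fun p =>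
    if hp : ∀ j m, p j (ee h j (Sum.inr m)) = enum τ hτ j m then psi h e τ hτ p hp else 1
    with hΨdef
  have hΦeq : ∀ (σ : Perm (Fin d)) (hσ : ∀ q, τ (σ q) = (e.symm q).1),
      Φ σ = fun j => cperm h e τ hτ σ hσ j := by
    intro σ hσ; funext j; rw [hΦdef]; exact dif_pos hσ
  have hΨeq : ∀ (p : Fin n → Perm (Fin d))
      (hp : ∀ j m, p j (ee h j (Sum.inr m)) = enum τ hτ j m),
      Ψ p = psi h e τ hτ p hp := by
    intro p hp; rw [hΨdef]; exact dif_pos hp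
  have hbij : ∑ p ∈ Fintype.piFinset (fun j => Pset h τ hτ j),
          ∏ j, (sgn (p j) * ∏ l, C (p j (ee h j (Sum.inl l))) (e ⟨j, l⟩))
      = ∑ σ ∈ Afin e τ,
          ∏ j, (sgn (Φ σ j) * ∏ l, C (σ (e ⟨j, l⟩)) (e ⟨j, l⟩)) := by
    apply Finset.sum_nbij' (i := Ψ) (j := Φ)
    · intro p hp
      have hp' : ∀ j m, p j (ee h j (Sum.inr m)) = enum τ hτ j m := by
        intro j m
        exact (mem_Pset h τ hτ).mp (Fintype.mem_piFinset.mp hp j) m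
      rw [hΨeq p hp']
      exact (mem_Afin _).mpr (psi_mem h e τ hτ p hp')
    · intro σ hσ
      have hσ' := (mem_Afin _).mp hσ
      rw [hΦeq σ hσ']
      rw [Fintype.mem_piFinset]
      intro j
      rw [mem_Pset]
      intro m
      exact cperm_inr h e τ hτ σ hσ' j m
    · intro p hp
      have hp' : ∀ j m, p j (ee h j (Sum.inr m)) = enum τ hτ j m := by
        intro j m
        exact (mem_Pset h τ hτ).mp (Fintype.mem_piFinset.mp hp j) m
      rw [hΨeq p hp']
      have hσ' : ∀ q, τ ((psi h e τ hτ p hp') q) = (e.symm q).1 := psi_mem h e τ hτ p hp'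
      rw [hΦeq _ hσ']
      funext j
      exact cperm_psi h e τ hτ p hp' hσ' j
    · intro σ hσ
      have hσ' := (mem_Afin _).mp hσ
      rw [hΦeq σ hσ']
      have hp' : ∀ j m, cperm h e τ hτ σ hσ' j (ee h j (Sum.inr m)) = enum τ hτ j m :=
        fun j m => cperm_inr h e τ hτ σ hσ' j m
      rw [hΨeq _ hp']
      exact psi_cperm h e τ hτ σ hσ' hp'
    · intro p hp
      have hp' : ∀ j m, p j (ee h j (Sum.inr m)) = enum τ hτ j m := by
        intro j m
        exact (mem_Pset h τ hτ).mp (Fintype.mem_piFinset.mp hp j) m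
      rw [hΨeq p hp']
      have hσ' : ∀ q, τ ((psi h e τ hτ p hp') q) = (e.symm q).1 := psi_mem h e τ hτ p hp'
      have hΦeq' : ∀ j, Φ (psi h e τ hτ p hp') j = cperm h e τ hτ (psi h e τ hτ p hp') hσ' j :=
        fun j => dif_pos hσ'
      apply Finset.prod_congr rfl
      intro j _
      rw [hΦeq' j, cperm_psi h e τ hτ p hp' hσ' j]
      have hps : ∀ l : Fin (k j), (psi h e τ hτ p hp') (e ⟨j, l⟩) = p j (ee h j (Sum.inl l)) :=
        fun l => psi_apply h e τ hτ p hp' j l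
      congr 1
      apply Finset.prod_congr rfl
      intro l _
      rw [hps l]
  rw [hpi, hbij]
  -- step 3: factor out the constant sign
  rcases Finset.eq_empty_or_nonempty (Afin e τ) with hemp | ⟨σ₀, hσ₀⟩
  · rw [hemp]
    simp
  · have hσ₀' := (mem_Afin _).mp hσ₀
    set κ : ℝ := sgn σ₀ * ∏ j, sgn (cperm h e τ hτ σ₀ hσ₀' j) with hκdef
    have habsκ : |κ| = 1 := by
      rw [hκdef, abs_mul, abs_sgn, Finset.abs_prod]
      rw [Finset.prod_congr rfl (fun j _ => abs_sgn (cperm h e τ hτ σ₀ hσ₀' j))]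
      simp
    have hconst : ∀ (σ : Perm (Fin d)) (hσ : ∀ q, τ (σ q) = (e.symm q).1),
        ∏ j, sgn (cperm h e τ hτ σ hσ j) = κ * sgn σ := by
      intro σ hσ
      have h2 := units_cast_eq (sign_constancy h e τ hτ hσ hσ₀')
      rw [Units.val_mul, Units.val_mul, Int.cast_mul, Int.cast_mul,
        sgn_prod_cast (fun j => cperm h e τ hτ σ hσ j),
        sgn_prod_cast (fun j => cperm h e τ hτ σ₀ hσ₀' j),
        (show ((Perm.sign σ : ℤ) : ℝ) = sgn σ from rfl),
        (show ((Perm.sign σ₀ : ℤ) : ℝ) = sgn σ₀ from rfl)] at h2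
      have h3 : sgn σ * (sgn σ * ∏ j, sgn (cperm h e τ hτ σ hσ j)) = sgn σ * κ := by
        rw [h2, hκdef]
      rw [← mul_assoc, sgn_mul_self, one_mul] at h3
      rw [h3, mul_comm]
    have hsum : ∑ σ ∈ Afin e τ, ∏ j, (sgn (Φ σ j) * ∏ l, C (σ (e ⟨j, l⟩)) (e ⟨j, l⟩))
        = κ * ∑ σ ∈ Afin e τ, sgn σ * ∏ q, C (σ q) q := by
      rw [Finset.mul_sum]
      apply Finset.sum_congr rfl
      intro σ hσmem
      have hσ := (mem_Afin _).mp hσmem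
      have hΦeq' : ∀ j, Φ σ j = cperm h e τ hτ σ hσ j := fun j => dif_pos hσ
      calc ∏ j, (sgn (Φ σ j) * ∏ l, C (σ (e ⟨j, l⟩)) (e ⟨j, l⟩))
          = (∏ j, sgn (Φ σ j)) * ∏ j, ∏ l, C (σ (e ⟨j, l⟩)) (e ⟨j, l⟩) :=
            Finset.prod_mul_distrib
        _ = (∏ j, sgn (cperm h e τ hτ σ hσ j)) * ∏ q, C (σ q) q := by
            congr 1
            · exact Finset.prod_congr rfl fun j _ => by rw [hΦeq' j]
            · rw [← prod_sigma_univ' (fun p : ((j : Fin n) × Fin (k j)) => C (σ (e p)) (e p))]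
              exact Equiv.prod_comp e (fun q => C (σ q) q)
        _ = (κ * sgn σ) * ∏ q, C (σ q) q := by rw [hconst σ hσ]
        _ = κ * (sgn σ * ∏ q, C (σ q) q) := by rw [mul_assoc]
    rw [hsum, abs_mul, habsκ, one_mul]

end dets

section goodsec

variable (h : ∀ j, k j ≤ d) (e : ((j : Fin n) × Fin (k j)) ≃ Fin d)

/-- patterns with fibers of the prescribed sizes -/
def good (k : Fin n → ℕ) : Finset (Fin d → Fin n) :=
  univ.filter fun τ => ∀ j, (fib τ j).card = k j

lemma mem_good {τ : Fin d → Fin n} : τ ∈ good k ↔ ∀ j, (fib τ j).card = k j := by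
  simp [good]

lemma beta_good : (fun i => (e.symm i).1) ∈ good k := by
  rw [mem_good]
  intro j
  show ((univ : Finset (Fin d)).filter fun i => (e.symm i).1 = j).card = k j
  rw [card_filter_equiv e (fun p => p.1 = j)]
  exact card_sigma_fiber k j

lemma det_fiber (C : Matrix (Fin d) (Fin d) ℝ) :
    C.det = ∑ τ ∈ good k, ∑ σ ∈ Afin e τ, sgn σ * ∏ q, C (σ q) q := by
  classical
  rw [Matrix.det_apply']
  rw [← Finset.sum_fiberwise_of_maps_to
    (g := fun σ : Perm (Fin d) => fun i => (e.symm (σ.symm i)).1)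
    (t := good k) ?_ (fun σ => ((Perm.sign σ : ℤ) : ℝ) * ∏ q, C (σ q) q)]
  · apply Finset.sum_congr rfl
    intro τ _
    apply Finset.sum_congr
    · ext σ
      rw [Finset.mem_filter, mem_Afin]
      constructor
      · rintro ⟨_, hfn⟩ q
        have := congrFun hfn (σ q)
        simpa using this.symm
      · intro hσ
        refine ⟨Finset.mem_univ _, ?_⟩
        funext i
        have := hσ (σ.symm i)
        simpa using this.symm
    · intro σ _
      rfl
  · intro σ _
    rw [mem_good]
    intro j
    show ((univ : Finset (Fin d)).filter fun i => (e.symm (σ.symm i)).1 = j).card = k j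
    rw [card_filter_equiv (σ : Fin d ≃ Fin d) (fun q => (e.symm q).1 = j)]
    exact (mem_good.mp (beta_good e)) j

include e in
lemma card_good_le : (good (d := d) k).card ≤ Nat.factorial d := by
  classical
  have hinj : Set.InjOn
      (fun τ => if hτ : ∀ j, (fib τ j).card = k j then rho e τ hτ else 1)
      (good (d := d) k) := by
    intro τ hτm τ' hτ'm heq
    have hτ := mem_good.mp hτm
    have hτ' := mem_good.mp hτ'm
    simp only at heq
    rw [dif_pos hτ, dif_pos hτ'] at heq
    funext i
    obtain ⟨q, hq⟩ := (rho e τ hτ).surjective i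
    have h1 : τ i = (e.symm q).1 := by rw [← hq]; exact rho_fib e τ hτ q
    have h2 : τ' i = (e.symm q).1 := by
      rw [← hq]
      have : rho e τ hτ q = rho e τ' hτ' q := by rw [heq]
      rw [this]
      exact rho_fib e τ' hτ' q
    rw [h1, h2]
  have := Finset.card_le_card_of_injOn
    (fun τ => if hτ : ∀ j, (fib τ j).card = k j then rho e τ hτ else 1)
    (fun τ _ => Finset.mem_univ _) hinj
  calc (good (d := d) k).card ≤ (univ : Finset (Perm (Fin d))).card := this
    _ = Nat.factorial d := by rw [Finset.card_univ, Fintype.card_perm, Fintype.card_fin]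

end goodsec

section nmat

variable (h : ∀ j, k j ≤ d) (e : ((j : Fin n) × Fin (k j)) ≃ Fin d)
  (τ : Fin d → Fin n) (hτ : ∀ j, (fib τ j).card = k j)

lemma N_eq_mul (b : ((j : Fin n) × Fin (k j)) → Fin d → ℝ) (w : Fin d → Fin d → ℝ)
    (C : Matrix (Fin d) (Fin d) ℝ)
    (hb : ∀ p i, b p i = ∑ r, w r i * C r (e p)) (j : Fin n) :
    (Matrix.of fun i colI =>
        Sum.elim (fun l => b ⟨j, l⟩) (fun m => w (enum τ hτ j m)) ((ee h j).symm colI) i)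
      = (Matrix.of fun i r => w r i) * AcM h e τ hτ C j := by
  ext i colI
  rw [Matrix.mul_apply, Matrix.of_apply]
  obtain ⟨x, rfl⟩ := (ee h j).surjective colI
  rw [Equiv.symm_apply_apply]
  cases x with
  | inl l =>
    rw [Sum.elim_inl, hb ⟨j, l⟩ i]
    apply Finset.sum_congr rfl
    intro r _
    simp only [AcM, Matrix.of_apply, Equiv.symm_apply_apply, Sum.elim_inl]
  | inr m =>
    rw [Sum.elim_inr]
    have hterm : ∀ r, (Matrix.of fun i r => w r i) i r * AcM h e τ hτ C j r (ee h j (Sum.inr m))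
        = if r = enum τ hτ j m then w r i else 0 := by
      intro r
      simp only [AcM, Matrix.of_apply, Equiv.symm_apply_apply, Sum.elim_inr]
      by_cases hr : r = enum τ hτ j m
      · rw [if_pos hr, if_pos hr, mul_one]
      · rw [if_neg hr, if_neg hr, mul_zero]
    rw [Finset.sum_congr rfl (fun r _ => hterm r), Finset.sum_ite_eq' univ (enum τ hτ j m)
      (fun r => w r i)]
    rw [if_pos (Finset.mem_univ _)]

end nmat

lemma core {d n : ℕ} {k : Fin n → ℕ} (hn : 1 ≤ n) (h : ∀ j, k j ≤ d)
    (e : ((j : Fin n) × Fin (k j)) ≃ Fin d)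
    (b : ((j : Fin n) × Fin (k j)) → Fin d → ℝ)
    (w : Fin d → Fin d → ℝ) :
    ∃ en : (j : Fin n) → Fin (d - k j) → Fin d,
      (∀ i : Fin d, ((univ : Finset ((j : Fin n) × Fin (d - k j))).filter
          fun p => en p.1 p.2 = i).card = n - 1) ∧
      |Matrix.det (Matrix.of fun i q => b (e.symm q) i)|
          * |Matrix.det (Matrix.of fun i r => w r i)| ^ (n - 1)
        ≤ (Nat.factorial d : ℝ) * ∏ j, |Matrix.det (Matrix.of fun i colI =>
            Sum.elim (fun l => b ⟨j, l⟩) (fun m => w (en j m)) ((ee h j).symm colI) i)| := by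
  classical
  have hfact1 : (1 : ℝ) ≤ (Nat.factorial d : ℝ) := by
    exact_mod_cast Nat.one_le_iff_ne_zero.mpr (Nat.factorial_ne_zero d)
  by_cases hn1 : n = 1
  · subst hn1
    have hk0 : k 0 = d := by
      have hcard := Fintype.card_congr e
      rw [Fintype.card_sigma, Fintype.card_fin] at hcard
      simpa [Fin.sum_univ_one] using hcard
    have hd0 : ∀ j : Fin 1, d - k j = 0 := by
      intro j
      rw [Fin.eq_zero j, hk0]
      omega
    refine ⟨fun j m => (finCongr (hd0 j) m).elim0, ?_, ?_⟩
    · intro i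
      haveI : IsEmpty ((j : Fin 1) × Fin (d - k j)) :=
        ⟨fun p => (finCongr (hd0 p.1) p.2).elim0⟩
      rw [Finset.univ_eq_empty, Finset.filter_empty, Finset.card_empty]
    · rw [Fin.prod_univ_one]
      simp only [Nat.sub_self, pow_zero, mul_one]
      beta_reduce
      set χfun : Fin d → Fin d := fun colI =>
        e ⟨0, Sum.elim id (fun m => (finCongr (hd0 0) m).elim0) ((ee h 0).symm colI)⟩
        with hχdef
      have hN : (Matrix.of fun i colI =>
          Sum.elim (fun l => b ⟨0, l⟩) (fun m => w ((finCongr (hd0 0) m).elim0))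
            ((ee h 0).symm colI) i)
          = (Matrix.of fun i q => b (e.symm q) i).submatrix id χfun := by
        ext i colI
        rw [Matrix.submatrix_apply, Matrix.of_apply, Matrix.of_apply]
        cases hx : (ee h 0).symm colI with
        | inl l =>
          have hcol : χfun colI = e ⟨0, l⟩ := by
            simp only [hχdef, hx, Sum.elim_inl, id_eq]
          rw [Sum.elim_inl, hcol, Equiv.symm_apply_apply, id_eq]
        | inr m => exact (finCongr (hd0 0) m).elim0
      have hχinj : Function.Injective χfun := by
        intro c c' hc
        simp only [hχdef] at hc
        have h1 := e.injective hc
        rw [Sigma.mk.inj_iff] at h1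
        have h2 := eq_of_heq h1.2
        cases hx : (ee h 0).symm c with
        | inr m => exact (finCongr (hd0 0) m).elim0
        | inl l =>
          cases hx' : (ee h 0).symm c' with
          | inr m => exact (finCongr (hd0 0) m).elim0
          | inl l' =>
            rw [hx, hx'] at h2
            simp only [Sum.elim_inl, id_eq] at h2
            have : (ee h 0).symm c = (ee h 0).symm c' := by rw [hx, hx', h2]
            exact (ee h 0).symm.injective this
      set χ : Perm (Fin d) := Equiv.ofBijective χfun
        ((Finite.injective_iff_bijective).mp hχinj) with hχpdef
      have hχeq : χfun = ⇑χ := rfl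
      rw [hN, hχeq, Matrix.det_permute']
      rw [abs_mul]
      have habs1 : |((Perm.sign χ : ℤ) : ℝ)| = 1 := abs_sgn χ
      rw [habs1, one_mul]
      exact le_mul_of_one_le_left (abs_nonneg _) hfact1
  · -- now n ≥ 2
    have hn2 : 2 ≤ n := by omega
    set W : Matrix (Fin d) (Fin d) ℝ := Matrix.of fun i r => w r i with hWdef
    set M : Matrix (Fin d) (Fin d) ℝ := Matrix.of fun i q => b (e.symm q) i with hMdef
    by_cases hW : W.det = 0
    · have hβ : ∀ j, (fib (fun i => (e.symm i).1) j).card = k j := mem_good.mp (beta_good e)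
      refine ⟨enum (fun i => (e.symm i).1) hβ, count_enum _ hβ, ?_⟩
      have hzero : |W.det| ^ (n - 1) = 0 := by
        rw [hW, abs_zero]
        exact zero_pow (by omega)
      rw [hzero, mul_zero]
      apply mul_nonneg (le_trans zero_le_one hfact1)
      exact Finset.prod_nonneg fun j _ => abs_nonneg _
    · have hWu : IsUnit W.det := isUnit_iff_ne_zero.mpr hW
      set C : Matrix (Fin d) (Fin d) ℝ := W⁻¹ * M with hCdef
      have hM : W * C = M := Matrix.mul_nonsing_inv_cancel_left W M hWu
      have hb : ∀ p i, b p i = ∑ r, w r i * C r (e p) := by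
        intro p i
        have h1 : M i (e p) = b p i := by
          rw [hMdef, Matrix.of_apply, Equiv.symm_apply_apply]
        rw [← h1, ← hM, Matrix.mul_apply]
        rfl
      set F : (Fin d → Fin n) → ℝ := fun τ =>
        if hτ : ∀ j, (fib τ j).card = k j then
          ∏ j, |Matrix.det (Matrix.of fun i colI =>
            Sum.elim (fun l => b ⟨j, l⟩) (fun m => w (enum τ hτ j m))
              ((ee h j).symm colI) i)|
        else 0 with hFdef
      have hFval : ∀ (τ : Fin d → Fin n) (hτ : ∀ j, (fib τ j).card = k j),
          F τ = |W.det| ^ n * |∑ σ ∈ Afin e τ, sgn σ * ∏ q, C (σ q) q| := by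
        intro τ hτ
        rw [hFdef]
        simp only
        rw [dif_pos hτ]
        have hNj : ∀ j, (Matrix.of fun i colI =>
            Sum.elim (fun l => b ⟨j, l⟩) (fun m => w (enum τ hτ j m))
              ((ee h j).symm colI) i).det = W.det * (AcM h e τ hτ C j).det := by
          intro j
          rw [N_eq_mul h e τ hτ b w C hb j, Matrix.det_mul]
        calc ∏ j, |Matrix.det (Matrix.of fun i colI =>
            Sum.elim (fun l => b ⟨j, l⟩) (fun m => w (enum τ hτ j m))
              ((ee h j).symm colI) i)|
            = ∏ j, (|W.det| * |(AcM h e τ hτ C j).det|) := by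
              apply Finset.prod_congr rfl
              intro j _
              rw [hNj j, abs_mul]
          _ = |W.det| ^ n * ∏ j, |(AcM h e τ hτ C j).det| := by
              rw [Finset.prod_mul_distrib]
              congr 1
              rw [Finset.prod_const, Finset.card_univ, Fintype.card_fin]
          _ = |W.det| ^ n * |∏ j, (AcM h e τ hτ C j).det| := by rw [Finset.abs_prod]
          _ = |W.det| ^ n * |∑ σ ∈ Afin e τ, sgn σ * ∏ q, C (σ q) q| := by
              rw [crux h e τ hτ C]
      obtain ⟨τs, hτsmem, hmax⟩ := Finset.exists_max_image (good k) F ⟨_, beta_good e⟩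
      have hτs : ∀ j, (fib τs j).card = k j := mem_good.mp hτsmem
      refine ⟨enum τs hτs, count_enum τs hτs, ?_⟩
      have hFτs : F τs = ∏ j, |Matrix.det (Matrix.of fun i colI =>
          Sum.elim (fun l => b ⟨j, l⟩) (fun m => w (enum τs hτs j m))
            ((ee h j).symm colI) i)| := by
        rw [hFdef]; simp only; rw [dif_pos hτs]
      have hFnonneg : 0 ≤ F τs := by
        rw [hFτs]
        exact Finset.prod_nonneg fun j _ => abs_nonneg _
      have step1 : |M.det| * |W.det| ^ (n - 1) ≤ |W.det| ^ n * |C.det| := by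
        rw [← hM, Matrix.det_mul, abs_mul]
        have hpow : |W.det| ^ n = |W.det| ^ (n - 1) * |W.det| := by
          rw [← pow_succ]
          congr 1
          omega
        rw [hpow]
        ring_nf
        exact le_of_eq (by ring)
      have step2 : |W.det| ^ n * |C.det| ≤ ∑ τ ∈ good k, F τ := by
        rw [det_fiber e C]
        calc |W.det| ^ n * |∑ τ ∈ good k, ∑ σ ∈ Afin e τ, sgn σ * ∏ q, C (σ q) q|
            ≤ |W.det| ^ n * ∑ τ ∈ good k, |∑ σ ∈ Afin e τ, sgn σ * ∏ q, C (σ q) q| := by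
              apply mul_le_mul_of_nonneg_left (Finset.abs_sum_le_sum_abs _ _)
                (pow_nonneg (abs_nonneg _) n)
          _ = ∑ τ ∈ good k, |W.det| ^ n * |∑ σ ∈ Afin e τ, sgn σ * ∏ q, C (σ q) q| := by
              rw [Finset.mul_sum]
          _ = ∑ τ ∈ good k, F τ := by
              apply Finset.sum_congr rfl
              intro τ hτm
              rw [hFval τ (mem_good.mp hτm)]
      have step3 : ∑ τ ∈ good k, F τ ≤ (Nat.factorial d : ℝ) * F τs := by
        calc ∑ τ ∈ good k, F τ ≤ (good k).card • F τs :=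
              Finset.sum_le_card_nsmul _ _ _ (fun τ hτm => hmax τ hτm)
          _ = ((good k).card : ℝ) * F τs := nsmul_eq_mul _ _
          _ ≤ (Nat.factorial d : ℝ) * F τs := by
              apply mul_le_mul_of_nonneg_right _ hFnonneg
              exact_mod_cast card_good_le e
      calc |M.det| * |W.det| ^ (n - 1) ≤ |W.det| ^ n * |C.det| := step1
        _ ≤ ∑ τ ∈ good k, F τ := step2
        _ ≤ (Nat.factorial d : ℝ) * F τs := step3
        _ = (Nat.factorial d : ℝ) * ∏ j, |Matrix.det (Matrix.of fun i colI =>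
            Sum.elim (fun l => b ⟨j, l⟩) (fun m => w (enum τs hτs j m))
              ((ee h j).symm colI) i)| := by rw [hFτs]

end Stmt4Aux

theorem stmt_4 (d : ℕ) :
    ∃ c : ℝ, 0 < c ∧ ∀ (n : ℕ) (k : Fin n → ℕ)
      (V : Fin n → Submodule ℝ (EuclideanSpace ℝ (Fin d))),
      (∀ j, Module.finrank ℝ ↥(V j) = k j) → (∑ j, k j = d) →
      ∀ w : Fin d → EuclideanSpace ℝ (Fin d),
      ∃ idx : ((j : Fin n) × Fin (d - k j)) → Fin d,
        (∀ i : Fin d, (Finset.univ.filter fun p => idx p = i).card = n - 1) ∧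
        c * subspaceWedge V * (absDet w) ^ (n - 1) ≤
          ∏ j, mixedWedge (V j) (fun h : Fin (d - k j) => w (idx ⟨j, h⟩)) := by
  classical
  refine ⟨((Nat.factorial d : ℝ))⁻¹, by positivity, ?_⟩
  intro n k V hk hsum w
  obtain rfl : k = fun j => Module.finrank ℝ ↥(V j) := by
    funext j; exact (hk j).symm
  by_cases hn0 : n = 0
  · subst hn0
    have hd0 : d = 0 := by simpa using hsum.symm
    subst hd0
    refine ⟨fun p => p.1.elim0, ?_, ?_⟩
    · intro i
      exact i.elim0
    · rw [Finset.univ_eq_empty (α := Fin 0), Finset.prod_empty]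
      have hsw : subspaceWedge V = 1 := by
        rw [subspaceWedge, dif_pos (by simp)]
        rw [absDet, Matrix.det_fin_zero, abs_one]
      rw [hsw]
      norm_num
  · have hn1 : 1 ≤ n := by omega
    have hsum' : ∑ j, Module.finrank ℝ ↥(V j) = d := by simpa using hsum
    have hk' : ∀ j, Module.finrank ℝ ↥(V j) ≤ d := by
      intro j
      have h1 := Finset.single_le_sum (f := fun j => Module.finrank ℝ ↥(V j))
        (fun _ _ => Nat.zero_le _) (Finset.mem_univ j)
      omega
    have hcard : Fintype.card ((j : Fin n) × Fin (Module.finrank ℝ ↥(V j))) = d := by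
      rw [Fintype.card_sigma]
      simpa using hsum'
    set e := Fintype.equivFinOfCardEq hcard with hedef
    set b : ((j : Fin n) × Fin (Module.finrank ℝ ↥(V j))) → Fin d → ℝ :=
      fun p i => (((stdOrthonormalBasis ℝ ↥(V p.1)) p.2 : EuclideanSpace ℝ (Fin d)) i)
      with hbdef
    obtain ⟨en, hcount, hineq⟩ := Stmt4Aux.core hn1 hk' e b (fun r i => w r i)
    refine ⟨fun p => en p.1 p.2, ?_, ?_⟩
    · intro i
      exact hcount i
    · have hsw : subspaceWedge V
          = |Matrix.det (Matrix.of fun i q => b (e.symm q) i)| := by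
        rw [subspaceWedge, dif_pos hcard]
        rfl
      have haw : absDet w = |Matrix.det (Matrix.of fun i r => (fun r i => w r i) r i)| := rfl
      have hmw : ∀ j, mixedWedge (V j) (fun m => w (en j m))
          = |Matrix.det (Matrix.of fun i colI =>
              Sum.elim (fun l => b ⟨j, l⟩) (fun m => (fun r i => w r i) (en j m))
                ((Stmt4Aux.ee hk' j).symm colI) i)| := by
        intro j
        rw [mixedWedge, dif_pos (Nat.add_sub_cancel' (hk' j)), absDet]
        congr 2
        ext i c
        obtain ⟨x, rfl⟩ := (Stmt4Aux.ee hk' j).surjective c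
        simp only [Matrix.of_apply, Stmt4Aux.ee, Equiv.symm_apply_apply]
        cases x <;> rfl
      have hprod : (∏ j, mixedWedge (V j) (fun m => w (en j m)))
          = ∏ j, |Matrix.det (Matrix.of fun i colI =>
              Sum.elim (fun l => b ⟨j, l⟩) (fun m => (fun r i => w r i) (en j m))
                ((Stmt4Aux.ee hk' j).symm colI) i)| :=
        Finset.prod_congr rfl fun j _ => hmw j
      rw [hsw, haw, hprod]
      have hpos : (0 : ℝ) < (Nat.factorial d : ℝ) := by positivity
      rw [mul_assoc]
      rw [inv_mul_le_iff₀ hpos]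
      exact le_trans hineq (le_of_eq rfl)
end

section
/- Let V_1, …, V_n be linear subspaces of ℝ^d with k_j = dim V_j and k_1 + ⋯ + k_n = d. Then for any vectors w_1, …, w_d ∈ ℝ^d, there is a constant c_d > 0 depending only on d such that max ∏_{j=1}^n |(V_j)^⊥ ∧ w_{i_{j,1}} ∧ ⋯ ∧ w_{i_{j,k_j}}| ≥ c_d · |V_1 ∧ ⋯ ∧ V_n| · |det(w_1, …, w_d)|, where (V_j)^⊥ is the orthogonal complement of V_j, the maximum is taken over all families of indices (i_{j,h})_{1 ≤ j ≤ n, 1 ≤ h ≤ k_j} with values in {1, …, d} such that each index value i ∈ {1, …, d} occurs exactly once among all the i_{j,h}, and det(w_1, …, w_d) is the determinant of the matrix with columns w_1, …, w_d. -/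
open MeasureTheory
open scoped RealInnerProductSpace ENNReal

open Matrix

lemma absDet_comp_perm {d : ℕ} (v : Fin d → EuclideanSpace ℝ (Fin d)) (σ : Equiv.Perm (Fin d)) :
    absDet (fun i => v (σ i)) = absDet v := by
  unfold absDet
  have h : (Matrix.of fun i j => v (σ j) i) = (Matrix.of fun i j => v j i).submatrix id σ := rfl
  rw [h, Matrix.det_permute', abs_mul]
  rcases Int.units_eq_one_or (Equiv.Perm.sign σ) with hs | hs <;> simp [hs]

lemma gram_mul {d : ℕ} (v w : Fin d → EuclideanSpace ℝ (Fin d)) :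
    (Matrix.of fun i j => v j i)ᵀ * (Matrix.of fun i j => w j i)
      = Matrix.of fun a b => ⟪v a, w b⟫ := by
  ext a b
  simp [Matrix.mul_apply, PiLp.inner_apply, RCLike.inner_apply, mul_comm]

lemma absDet_orthonormal {d : ℕ} {v : Fin d → EuclideanSpace ℝ (Fin d)}
    (hv : Orthonormal ℝ v) : absDet v = 1 := by
  have h1 : (Matrix.of fun i j => v j i)ᵀ * (Matrix.of fun i j => v j i) = 1 := by
    rw [gram_mul]
    ext a b
    simpa [Matrix.one_apply] using orthonormal_iff_ite.mp hv a b
  have h2 := congrArg Matrix.det h1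
  rw [Matrix.det_mul, Matrix.det_transpose, Matrix.det_one] at h2
  unfold absDet
  nlinarith [abs_nonneg ((Matrix.of fun i j => v j i).det),
    sq_abs ((Matrix.of fun i j => v j i).det)]

lemma mixedWedge_nonneg {d m : ℕ} (V : Submodule ℝ (EuclideanSpace ℝ (Fin d)))
    (w : Fin m → EuclideanSpace ℝ (Fin d)) : 0 ≤ mixedWedge V w := by
  unfold mixedWedge
  split
  · exact abs_nonneg _
  · exact le_refl 0

lemma orthonormal_coe {d : ℕ} (V : Submodule ℝ (EuclideanSpace ℝ (Fin d))) :
    Orthonormal ℝ (fun a => ((stdOrthonormalBasis ℝ ↥V) a : EuclideanSpace ℝ (Fin d))) := by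
  have h := (stdOrthonormalBasis ℝ ↥V).orthonormal
  rw [orthonormal_iff_ite] at h ⊢
  intro i j
  rw [← Submodule.coe_inner]
  exact h i j

lemma mixedWedge_orthogonal {d m : ℕ} (V : Submodule ℝ (EuclideanSpace ℝ (Fin d)))
    (hV : Module.finrank ℝ ↥V = m) (w : Fin m → EuclideanSpace ℝ (Fin d)) :
    mixedWedge Vᗮ w = |Matrix.det (Matrix.of fun l t : Fin m =>
      ⟪((stdOrthonormalBasis ℝ ↥V) (Fin.cast hV.symm l) : EuclideanSpace ℝ (Fin d)), w t⟫)| := by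
  subst hV
  have hd : Module.finrank ℝ ↥Vᗮ + Module.finrank ℝ ↥V = d := by
    rw [add_comm, Submodule.finrank_add_finrank_orthogonal]
    exact finrank_euclideanSpace_fin
  set r := Module.finrank ℝ ↥Vᗮ with hr
  set q : Fin r → EuclideanSpace ℝ (Fin d) := fun a => (stdOrthonormalBasis ℝ ↥Vᗮ a : _) with hqdef
  set u : Fin (Module.finrank ℝ ↥V) → EuclideanSpace ℝ (Fin d) :=
    fun a => (stdOrthonormalBasis ℝ ↥V a : _) with hudef
  set eqv : Fin r ⊕ Fin (Module.finrank ℝ ↥V) ≃ Fin d := finSumFinEquiv.trans (finCongr hd)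
    with heqv
  rw [mixedWedge, dif_pos hd]
  set colM : Fin d → EuclideanSpace ℝ (Fin d) := fun i => Sum.elim q w (eqv.symm i) with hcolM
  set colO : Fin d → EuclideanSpace ℝ (Fin d) := fun i => Sum.elim q u (eqv.symm i) with hcolO
  have hq : Orthonormal ℝ q := orthonormal_coe _
  have hu : Orthonormal ℝ u := orthonormal_coe _
  have hcross : ∀ a t, ⟪q a, u t⟫ = 0 := fun a t =>
    Submodule.inner_left_of_mem_orthogonal (SetLike.coe_mem _) (SetLike.coe_mem _)
  have hSum : Orthonormal ℝ (Sum.elim q u) := by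
    rw [orthonormal_iff_ite]
    rintro (a | a) (b | b)
    · simpa using orthonormal_iff_ite.mp hq a b
    · simpa using hcross a b
    · simp only [Sum.elim_inr, Sum.elim_inl]
      rw [show ((if (Sum.inr a : Fin r ⊕ Fin (Module.finrank ℝ ↥V)) = Sum.inl b then (1:ℝ)
        else 0)) = 0 by simp, real_inner_comm]
      exact hcross b a
    · simpa using orthonormal_iff_ite.mp hu a b
  have hON : Orthonormal ℝ colO := hSum.comp _ eqv.symm.injective
  set M : Matrix (Fin d) (Fin d) ℝ := Matrix.of fun i s => colM s i with hM
  set O : Matrix (Fin d) (Fin d) ℝ := Matrix.of fun i s => colO s i with hO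
  have habsO : |O.det| = 1 := absDet_orthonormal hON
  set C : Matrix (Fin (Module.finrank ℝ ↥V)) (Fin (Module.finrank ℝ ↥V)) ℝ :=
    Matrix.of fun l t => ⟪u l, w t⟫ with hC
  have hgram : Oᵀ * M = Matrix.of fun a b => ⟪colO a, colM b⟫ := gram_mul colO colM
  have hPB : (Oᵀ * M).submatrix eqv eqv
      = Matrix.fromBlocks 1 (Matrix.of fun a t => ⟪q a, w t⟫) 0 C := by
    ext s t
    have hentry : (Oᵀ * M).submatrix eqv eqv s t = ⟪Sum.elim q u s, Sum.elim q w t⟫ := by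
      rw [Matrix.submatrix_apply, hgram]
      simp [colO, colM]
    rcases s with a | a <;> rcases t with b | b <;> rw [hentry]
    · simpa [Matrix.one_apply] using orthonormal_iff_ite.mp hq a b
    · simp
    · simp only [Sum.elim_inr, Sum.elim_inl, Matrix.fromBlocks_apply₂₁, Matrix.zero_apply]
      rw [real_inner_comm]
      exact hcross b a
    · simp [C, PiLp.inner_apply]
  have hdetP : (Oᵀ * M).det = C.det := by
    rw [← Matrix.det_submatrix_equiv_self eqv, hPB, Matrix.det_fromBlocks_zero₂₁,
      Matrix.det_one, one_mul]
  have hfinal : |M.det| = |C.det| := by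
    calc |M.det| = |O.det| * |M.det| := by rw [habsO, one_mul]
    _ = |Oᵀ.det * M.det| := by rw [abs_mul, Matrix.det_transpose]
    _ = |(Oᵀ * M).det| := by rw [Matrix.det_mul]
    _ = |C.det| := by rw [hdetP]
  simpa [absDet, Fin.cast_refl] using hfinal

def fiberEquiv {n : ℕ} (k : Fin n → ℕ) (j : Fin n) :
    Fin (k j) ≃ {r : (j' : Fin n) × Fin (k j') // r.1 = j} where
  toFun l := ⟨⟨j, l⟩, rfl⟩
  invFun x := Fin.cast (congrArg k x.2) x.1.2
  left_inv l := rfl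
  right_inv x := by
    obtain ⟨⟨j', l⟩, h⟩ := x
    dsimp at h
    subst h
    rfl

lemma det_partial_zero {n : ℕ} {k : Fin n → ℕ}
    (B : ((j : Fin n) × Fin (k j)) → ((j : Fin n) × Fin (k j)) → ℝ)
    (p : ((j : Fin n) × Fin (k j)) → Fin n) (j₀ : Fin n)
    (hj : k j₀ < (Finset.univ.filter fun c => p c = j₀).card) :
    (Matrix.of fun c r => if r.1 = p c then B r c else 0).det = 0 := by
  classical
  let ι := (j : Fin n) × Fin (k j)
  set M : Matrix ι ι ℝ := Matrix.of fun c r => if r.1 = p c then B r c else 0 with hMdef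
  show M.det = 0
  rw [Matrix.det]
  refine AlternatingMap.map_linearDependent _ _ ?_
  intro hLI
  let L : ({r : ι // r.1 = j₀} → ℝ) →ₗ[ℝ] (ι → ℝ) :=
    { toFun := fun x r => if h : r.1 = j₀ then x ⟨r, h⟩ else 0
      map_add' := by intro x y; funext r; by_cases h : r.1 = j₀ <;> simp [h]
      map_smul' := by intro a x; funext r; by_cases h : r.1 = j₀ <;> simp [h] }
  have hmem : ∀ c : {c : ι // p c = j₀}, M c.1 ∈ LinearMap.range L := by
    intro c
    refine ⟨fun z => B z.1 c.1, ?_⟩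
    funext r
    show (if h : r.1 = j₀ then B r c.1 else 0) = if r.1 = p c.1 then B r c.1 else 0
    rw [c.2]
    by_cases h : r.1 = j₀ <;> simp [h]
  let v : {c : ι // p c = j₀} → LinearMap.range L := fun c => ⟨M c.1, hmem c⟩
  have hv : LinearIndependent ℝ v := by
    apply LinearIndependent.of_comp (LinearMap.range L).subtype
    exact (hLI.comp Subtype.val Subtype.val_injective : _)
  have hcard := hv.fintype_card_le_finrank
  have h1 : Module.finrank ℝ ↥(LinearMap.range L) ≤ k j₀ := by
    refine le_trans (LinearMap.finrank_range_le L) ?_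
    rw [Module.finrank_fintype_fun_eq_card]
    rw [Fintype.card_congr (fiberEquiv k j₀).symm, Fintype.card_fin]
  have h2 : Fintype.card {c : ι // p c = j₀} = (Finset.univ.filter fun c => p c = j₀).card :=
    Fintype.card_subtype _
  omega

lemma perm_balanced {n : ℕ} {k : Fin n → ℕ} (p : ((j : Fin n) × Fin (k j)) → Fin n)
    (hp : ∀ j, (Finset.univ.filter fun c => p c = j).card = k j) :
    ∃ Φ : Equiv.Perm ((j : Fin n) × Fin (k j)), ∀ x, p (Φ x) = x.1 := by
  classical
  let ψ : (j : Fin n) → Fin (k j) ≃ {c : (j' : Fin n) × Fin (k j') // p c = j} :=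
    fun j => Fintype.equivOfCardEq
      (((Fintype.card_fin (k j)).trans (hp j).symm).trans
        (Fintype.card_subtype fun c => p c = j).symm)
  refine ⟨(Equiv.sigmaCongrRight ψ).trans (Equiv.sigmaFiberEquiv p), ?_⟩
  rintro ⟨j, l⟩
  exact (ψ j l).prop

theorem stmt_5 (d : ℕ) :
    ∃ c : ℝ, 0 < c ∧ ∀ (n : ℕ) (k : Fin n → ℕ)
      (V : Fin n → Submodule ℝ (EuclideanSpace ℝ (Fin d))),
      (∀ j, Module.finrank ℝ ↥(V j) = k j) → (∑ j, k j = d) →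
      ∀ w : Fin d → EuclideanSpace ℝ (Fin d),
      ∃ idx : ((j : Fin n) × Fin (k j)) → Fin d,
        (∀ i : Fin d, (Finset.univ.filter fun p => idx p = i).card = 1) ∧
        c * subspaceWedge V * absDet w ≤
          ∏ j, mixedWedge ((V j)ᗮ) (fun h : Fin (k j) => w (idx ⟨j, h⟩)) := by
  classical
  refine ⟨(d.factorial : ℝ)⁻¹, by positivity, ?_⟩
  intro n k V hk hsum w
  have hcard : Fintype.card ((j : Fin n) × Fin (k j)) = d := by
    simp [hsum]
  let e : ((j : Fin n) × Fin (k j)) ≃ Fin d := Fintype.equivFinOfCardEq hcard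
  -- fibers of a bijection are singletons
  have hfiber : ∀ (f : ((j : Fin n) × Fin (k j)) ≃ Fin d) (i : Fin d),
      (Finset.univ.filter fun p => f p = i).card = 1 := by
    intro f i
    have : (Finset.univ.filter fun p => f p = i) = {f.symm i} := by
      ext r
      simp [Equiv.eq_symm_apply, eq_comm]
    rw [this, Finset.card_singleton]
  let u : ((j : Fin n) × Fin (k j)) → EuclideanSpace ℝ (Fin d) :=
    fun r => ((stdOrthonormalBasis ℝ ↥(V r.1)) (Fin.cast (hk r.1).symm r.2) : _)
  let F : Fin d → EuclideanSpace ℝ (Fin d) := fun i => u (e.symm i)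
  -- subspaceWedge equals absDet F
  have hsw : subspaceWedge V = absDet F := by
    have h' : Fintype.card ((j : Fin n) × Fin (Module.finrank ℝ ↥(V j))) = d := by
      simp only [Fintype.card_sigma, Fintype.card_fin, hk]
      exact hsum
    rw [subspaceWedge, dif_pos h']
    set e' := Fintype.equivFinOfCardEq h' with he'
    let ρ : ((j : Fin n) × Fin (Module.finrank ℝ ↥(V j))) ≃ ((j : Fin n) × Fin (k j)) :=
      Equiv.sigmaCongrRight fun j => finCongr (hk j)
    let σ : Equiv.Perm (Fin d) := (e'.symm.trans ρ).trans e
    have key : (fun i => (((stdOrthonormalBasis ℝ ↥(V (e'.symm i).1)) (e'.symm i).2 :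
        ↥(V (e'.symm i).1)) : EuclideanSpace ℝ (Fin d))) = fun i => F (σ i) := by
      funext i
      show _ = u (e.symm (e (ρ (e'.symm i))))
      rw [Equiv.symm_apply_apply]
      obtain ⟨j, l⟩ := e'.symm i
      show ((stdOrthonormalBasis ℝ ↥(V j)) l : EuclideanSpace ℝ (Fin d))
        = ((stdOrthonormalBasis ℝ ↥(V j)) (Fin.cast (hk j).symm (Fin.cast (hk j) l)) : _)
      rfl
    rw [key, absDet_comp_perm F σ]
  -- the Gram-type matrix
  set B : Matrix ((j : Fin n) × Fin (k j)) ((j : Fin n) × Fin (k j)) ℝ :=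
    Matrix.of fun r c => ⟪u r, w (e c)⟫ with hBdef
  have hdetB : |B.det| = subspaceWedge V * absDet w := by
    have hsub : B = (Matrix.of fun a b => ⟪F a, w b⟫).submatrix e e := by
      ext r c
      show ⟪u r, w (e c)⟫ = ⟪F (e r), w (e c)⟫
      simp only [F, Equiv.symm_apply_apply]
    rw [hsub, Matrix.det_submatrix_equiv_self, ← gram_mul F w, Matrix.det_mul,
      Matrix.det_transpose, abs_mul, hsw]
    rfl
  -- expansion of the determinant
  set Mp : (((j : Fin n) × Fin (k j)) → Fin n) →
      Matrix ((j : Fin n) × Fin (k j)) ((j : Fin n) × Fin (k j)) ℝ :=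
    fun p => Matrix.of fun c r => if r.1 = p c then B r c else 0 with hMpdef
  have hexp : B.det = ∑ p : ((j : Fin n) × Fin (k j)) → Fin n, (Mp p).det := by
    have h0 : B.det = Matrix.detRowAlternating (Matrix.of fun c r => B r c) := by
      rw [← Matrix.det_transpose B]
      rfl
    have h1 : (Matrix.of fun c r => B r c)
        = fun c => ∑ j' : Fin n, fun r => if r.1 = j' then B r c else 0 := by
      funext c r
      rw [Finset.sum_apply]
      simp
    rw [h0, h1]
    exact (Matrix.detRowAlternating.toMultilinearMap.map_sum
      (g := fun c j' => fun r => if r.1 = j' then B r c else 0))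
  -- the balanced set
  set T : Finset (((j : Fin n) × Fin (k j)) → Fin n) :=
    Finset.univ.filter fun p => ∀ j, (Finset.univ.filter fun c => p c = j).card = k j with hTdef
  have hzero : ∀ p ∉ T, (Mp p).det = 0 := by
    intro p hp
    have hnb : ¬∀ j, (Finset.univ.filter fun c => p c = j).card = k j := by
      intro h
      exact hp (Finset.mem_filter.mpr ⟨Finset.mem_univ _, h⟩)
    have hsumfib : ∑ j, (Finset.univ.filter fun c => p c = j).card = ∑ j, k j := by
      rw [← Finset.card_eq_sum_card_fiberwise (fun c _ => Finset.mem_univ (p c)),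
        Finset.card_univ, hcard, hsum]
    have hex : ∃ j₀, k j₀ < (Finset.univ.filter fun c => p c = j₀).card := by
      by_contra hno
      push_neg at hno
      exact hnb fun j => ((Finset.sum_eq_sum_iff_of_le fun i _ => hno i).mp
        hsumfib j (Finset.mem_univ j))
    obtain ⟨j₀, hj₀⟩ := hex
    exact det_partial_zero (fun r c => B r c) p j₀ hj₀
  -- permutation attached to a balanced p
  set Φp : (((j : Fin n) × Fin (k j)) → Fin n) → Equiv.Perm ((j : Fin n) × Fin (k j)) :=
    fun p => if hp : ∀ j, (Finset.univ.filter fun c => p c = j).card = k j then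
      (perm_balanced p hp).choose else 1 with hΦpdef
  have hΦp : ∀ (p : ((j : Fin n) × Fin (k j)) → Fin n)
      (hp : ∀ j, (Finset.univ.filter fun c => p c = j).card = k j),
      ∀ x, p (Φp p x) = x.1 := by
    intro p hp x
    rw [hΦpdef]
    simp only [dif_pos hp]
    exact (perm_balanced p hp).choose_spec x
  -- value of |det (Mp p)| for balanced p
  have hbal : ∀ (p : ((j : Fin n) × Fin (k j)) → Fin n)
      (hp : ∀ j, (Finset.univ.filter fun c => p c = j).card = k j),
      |(Mp p).det| = ∏ j, mixedWedge ((V j)ᗮ)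
        (fun h : Fin (k j) => w (e (Φp p ⟨j, h⟩))) := by
    intro p hp
    have hfix : ∀ x, p (Φp p x) = x.1 := hΦp p hp
    have habs : |((Mp p).submatrix (Φp p) id).det| = |(Mp p).det| := by
      rw [Matrix.det_permute, abs_mul]
      rcases Int.units_eq_one_or (Equiv.Perm.sign (Φp p)) with hs | hs <;> simp [hs]
    have hBT : ((Mp p).submatrix (Φp p) id).BlockTriangular Sigma.fst := by
      intro x y hxy
      show (if y.1 = p (Φp p x) then B y (Φp p x) else 0) = 0
      rw [hfix x, if_neg (ne_of_lt hxy)]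
    rw [← habs, hBT.det_fintype, Finset.abs_prod]
    refine Finset.prod_congr rfl fun j _ => ?_
    have hblock : ((((Mp p).submatrix (Φp p) id).toSquareBlock Sigma.fst j).submatrix
        (fiberEquiv k j) (fiberEquiv k j))
        = (Matrix.of fun l t : Fin (k j) => ⟪u ⟨j, l⟩, w (e (Φp p ⟨j, t⟩))⟫)ᵀ := by
      ext l t
      show (if (⟨j, t⟩ : (j : Fin n) × Fin (k j)).1 = p (Φp p ⟨j, l⟩)
        then B ⟨j, t⟩ (Φp p ⟨j, l⟩) else 0) = _
      rw [hfix ⟨j, l⟩, if_pos rfl]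
      rfl
    calc |((((Mp p).submatrix (Φp p) id)).toSquareBlock Sigma.fst j).det|
        = |(((((Mp p).submatrix (Φp p) id)).toSquareBlock Sigma.fst j).submatrix
            (fiberEquiv k j) (fiberEquiv k j)).det| := by
          rw [Matrix.det_submatrix_equiv_self]
      _ = |(Matrix.of fun l t : Fin (k j) => ⟪u ⟨j, l⟩, w (e (Φp p ⟨j, t⟩))⟫).det| := by
          rw [hblock, Matrix.det_transpose]
      _ = mixedWedge ((V j)ᗮ) (fun h : Fin (k j) => w (e (Φp p ⟨j, h⟩))) :=
          (mixedWedge_orthogonal (V j) (hk j) _).symm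
  -- final assembly
  by_cases hT : T.Nonempty
  · obtain ⟨p₀, hp₀T, hmax⟩ := Finset.exists_max_image T (fun p => |(Mp p).det|) hT
    have hp₀ : ∀ j, (Finset.univ.filter fun c => p₀ c = j).card = k j :=
      (Finset.mem_filter.mp hp₀T).2
    refine ⟨fun x => e (Φp p₀ x), hfiber ((Φp p₀).trans e), ?_⟩
    have hTcard : T.card ≤ d.factorial := by
      have hinj : Set.InjOn Φp T := by
        intro p hpT q hqT hfeq
        have hpb := (Finset.mem_filter.mp hpT).2
        have hqb := (Finset.mem_filter.mp hqT).2
        funext c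
        have h1 : p c = ((Φp p).symm c).1 := by
          have := hΦp p hpb ((Φp p).symm c)
          rwa [Equiv.apply_symm_apply] at this
        have h2 : q c = ((Φp q).symm c).1 := by
          have := hΦp q hqb ((Φp q).symm c)
          rwa [Equiv.apply_symm_apply] at this
        rw [h1, h2, hfeq]
      calc T.card ≤ (Finset.univ : Finset (Equiv.Perm ((j : Fin n) × Fin (k j)))).card :=
            Finset.card_le_card_of_injOn Φp (fun p _ => Finset.mem_univ _) hinj
        _ = d.factorial := by rw [Finset.card_univ, Fintype.card_perm, hcard]
    have hsum_le : |B.det| ≤ (T.card : ℝ) * |(Mp p₀).det| := by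
      calc |B.det| = |∑ p : ((j : Fin n) × Fin (k j)) → Fin n, (Mp p).det| := by rw [hexp]
        _ ≤ ∑ p : ((j : Fin n) × Fin (k j)) → Fin n, |(Mp p).det| :=
            Finset.abs_sum_le_sum_abs _ _
        _ = ∑ p ∈ T, |(Mp p).det| := (Finset.sum_subset (Finset.subset_univ T)
              (fun p _ hp => by rw [hzero p hp, abs_zero])).symm
        _ ≤ T.card • |(Mp p₀).det| := Finset.sum_le_card_nsmul _ _ _ (fun p hp => hmax p hp)
        _ = (T.card : ℝ) * |(Mp p₀).det| := nsmul_eq_mul _ _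
    have hfin : |B.det| ≤ (d.factorial : ℝ) * |(Mp p₀).det| := by
      refine le_trans hsum_le (mul_le_mul_of_nonneg_right ?_ (abs_nonneg _))
      exact_mod_cast hTcard
    rw [mul_assoc, ← hdetB, ← hbal p₀ hp₀]
    calc (d.factorial : ℝ)⁻¹ * |B.det|
        ≤ (d.factorial : ℝ)⁻¹ * ((d.factorial : ℝ) * |(Mp p₀).det|) := by
          apply mul_le_mul_of_nonneg_left hfin (by positivity)
      _ = |(Mp p₀).det| := by
          rw [← mul_assoc, inv_mul_cancel₀ (by positivity), one_mul]
  · have hT0 : T = ∅ := Finset.not_nonempty_iff_eq_empty.mp hT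
    have hBzero : B.det = 0 := by
      rw [hexp]
      refine Finset.sum_eq_zero fun p _ => hzero p (by simp [hT0])
    refine ⟨e, hfiber e, ?_⟩
    have h0 : subspaceWedge V * absDet w = 0 := by rw [← hdetB, hBzero, abs_zero]
    rw [mul_assoc, h0, mul_zero]
    exact Finset.prod_nonneg fun j _ => mixedWedge_nonneg _ _
end

section
/- Let m ≥ 2 and let c_1, …, c_m be integers with 0 ≤ c_j ≤ d and c_1 + ⋯ + c_m = d. For each 1 ≤ j ≤ m, let v_{j,1}, …, v_{j,d} be an orthonormal basis of ℝ^d (written as column vectors). Let M be the d(m−1) × d(m−1) block matrix with m − 1 row blocks (each of height d, indexed by r = 1, …, m−1) and m column blocks (block s having width d − c_s, indexed by s = 1, …, m), defined as follows: the (r, 1) block has columns v_{1,c_1+1}, …, v_{1,d} for every r; for s ≥ 2, the (r, s) block has columns v_{s,c_s+1}, …, v_{s,d} when r = s − 1 and is the zero block otherwise. Then |det M| = |det N|, where N is the d × d matrix whose columns are v_{1,1}, …, v_{1,c_1}, v_{2,1}, …, v_{2,c_2}, …, v_{m,1}, …, v_{m,c_m}. -/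
open scoped ENNReal

namespace Stmt6

variable {d m : ℕ}

def g : Fin (m - 1) → Fin m := fun r => ⟨r.val + 1, by have := r.isLt; omega⟩

variable (c : Fin m → ℕ)

abbrev Z1 := (r : Fin (m - 1)) × Fin (c (g r))
abbrev Z2 := (r : Fin (m - 1)) × Fin (d - c (g r))

def eRow (hc : ∀ j, c j ≤ d) : (Z1 c ⊕ Z2 (d := d) c) ≃ Fin (m - 1) × Fin d where
  toFun z :=
    match z with
    | .inl ⟨r, i⟩ => (r, ⟨i.val, by have := i.isLt; have := hc (g r); omega⟩)
    | .inr ⟨r, t⟩ => (r, ⟨c (g r) + t.val, by have := t.isLt; omega⟩)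
  invFun p :=
    if h : p.2.val < c (g p.1) then .inl ⟨p.1, ⟨p.2.val, h⟩⟩
    else .inr ⟨p.1, ⟨p.2.val - c (g p.1), by have := p.2.isLt; omega⟩⟩
  left_inv := by
    rintro (⟨r, i⟩ | ⟨r, t⟩) <;> dsimp only
    · rw [dif_pos i.isLt]
    · have ht := t.isLt
      rw [dif_neg (by omega)]
      simp
  right_inv := by
    rintro ⟨r, k⟩
    by_cases h : k.val < c (g r) <;> dsimp only
    · rw [dif_pos h]
    · rw [dif_neg h]
      have := k.isLt
      dsimp only
      simp only [Prod.mk.injEq]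
      exact ⟨trivial, Fin.ext (by simp; omega)⟩

def eColM (hm : 0 < m) (e0 : Fin (d - c ⟨0, hm⟩) ≃ Z1 c) :
    (Z1 c ⊕ Z2 (d := d) c) ≃ ((s : Fin m) × Fin (d - c s)) where
  toFun z :=
    match z with
    | .inl z1 => ⟨⟨0, hm⟩, e0.symm z1⟩
    | .inr ⟨r, t⟩ => ⟨g r, t⟩
  invFun p :=
    if h : p.1.val = 0 then
      .inl (e0 ⟨p.2.val, by
        have h2 := p.2.isLt
        have h3 : c p.fst = c ⟨0, hm⟩ := congrArg c (Fin.ext h)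
        omega⟩)
    else
      .inr ⟨⟨p.1.val - 1, by have := p.1.isLt; omega⟩,
        ⟨p.2.val, by
          have h2 := p.2.isLt
          have h3 : c (g ⟨p.1.val - 1, by have := p.1.isLt; omega⟩) = c p.fst :=
            congrArg c (Fin.ext (by simp [g]; omega))
          omega⟩⟩
  left_inv := by
    rintro (z1 | ⟨r, t⟩) <;> dsimp only
    · rw [dif_pos rfl]
      simp
    · rw [dif_neg (by simp [g])]
      rfl
  right_inv := by
    rintro ⟨⟨sv, hs⟩, l⟩
    rcases sv with _ | sv <;> dsimp only
    · rw [dif_pos rfl]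
      simp
    · rw [dif_neg (by simp)]
      rfl

def eRowN (hm : 0 < m) (hc : ∀ j, c j ≤ d) :
    (Fin (c ⟨0, hm⟩) ⊕ Fin (d - c ⟨0, hm⟩)) ≃ Fin d where
  toFun z :=
    match z with
    | .inl i => ⟨i.val, by have := i.isLt; have := hc ⟨0, hm⟩; omega⟩
    | .inr t => ⟨c ⟨0, hm⟩ + t.val, by have := t.isLt; omega⟩
  invFun k :=
    if h : k.val < c ⟨0, hm⟩ then .inl ⟨k.val, h⟩
    else .inr ⟨k.val - c ⟨0, hm⟩, by have := k.isLt; omega⟩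
  left_inv := by
    rintro (i | t) <;> dsimp only
    · rw [dif_pos i.isLt]
    · have ht := t.isLt
      rw [dif_neg (by omega)]
      simp
  right_inv := by
    intro k
    by_cases h : k.val < c ⟨0, hm⟩ <;> dsimp only
    · rw [dif_pos h]
    · rw [dif_neg h]
      have := k.isLt
      exact Fin.ext (by simp; omega)

def eColN (hm : 0 < m) (e0 : Fin (d - c ⟨0, hm⟩) ≃ Z1 c) :
    (Fin (c ⟨0, hm⟩) ⊕ Fin (d - c ⟨0, hm⟩)) ≃ ((j : Fin m) × Fin (c j)) where
  toFun z :=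
    match z with
    | .inl i => ⟨⟨0, hm⟩, i⟩
    | .inr t => ⟨g (e0 t).1, (e0 t).2⟩
  invFun p :=
    if h : p.1.val = 0 then
      .inl ⟨p.2.val, by
        have h2 := p.2.isLt
        have h3 : c p.fst = c ⟨0, hm⟩ := congrArg c (Fin.ext h)
        omega⟩
    else
      .inr (e0.symm ⟨⟨p.1.val - 1, by have := p.1.isLt; omega⟩,
        ⟨p.2.val, by
          have h2 := p.2.isLt
          have h3 : c (g ⟨p.1.val - 1, by have := p.1.isLt; omega⟩) = c p.fst :=
            congrArg c (Fin.ext (by simp [g]; omega))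
          omega⟩⟩)
  left_inv := by
    rintro (i | t) <;> dsimp only
    · rw [dif_pos rfl]
    · rw [dif_neg (by simp [g])]
      simp only [Sum.inr.injEq]
      rw [show (⟨⟨((g (e0 t).1).val - 1), _⟩, ⟨(e0 t).2.val, _⟩⟩ : Z1 c) = e0 t from ?_]
      · exact e0.symm_apply_apply t
      · rcases h : e0 t with ⟨r, i⟩
        simp [g]
        rfl
  right_inv := by
    rintro ⟨⟨sv, hs⟩, l⟩
    rcases sv with _ | sv <;> dsimp only
    · rw [dif_pos rfl]
    · rw [dif_neg (by simp)]
      dsimp only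
      rw [Equiv.apply_symm_apply]
      rfl



variable (v : Fin m → Fin d → EuclideanSpace ℝ (Fin d))

/-- the block matrix of the statement, as a rectangular matrix -/
def Fm (hc : ∀ j, c j ≤ d) : Matrix (Fin (m - 1) × Fin d) ((s : Fin m) × Fin (d - c s)) ℝ :=
  Matrix.of fun p q =>
    if (q.1 : ℕ) = 0 ∨ (p.1 : ℕ) + 1 = (q.1 : ℕ) then
      v q.1 ⟨c q.1 + (q.2 : ℕ), by have h1 := q.2.isLt; have h2 := hc q.1; omega⟩ p.2
    else 0

/-- the block matrix after row rotation -/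
def Fm' (hc : ∀ j, c j ≤ d) : Matrix (Fin (m - 1) × Fin d) ((s : Fin m) × Fin (d - c s)) ℝ :=
  Matrix.of fun p q =>
    if (q.1 : ℕ) = 0 then
      ∑ k, v (g p.1) p.2 k *
        v q.1 ⟨c q.1 + (q.2 : ℕ), by have h1 := q.2.isLt; have h2 := hc q.1; omega⟩ k
    else if (p.1 : ℕ) + 1 = (q.1 : ℕ) then
      (if (p.2 : ℕ) = c q.1 + (q.2 : ℕ) then 1 else 0)
    else 0

def Ablk (hm : 0 < m) (hc : ∀ j, c j ≤ d) (e0 : Fin (d - c ⟨0, hm⟩) ≃ Z1 c) :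
    Matrix (Z1 c) (Z1 c) ℝ :=
  Matrix.of fun z z' =>
    ∑ k, v (g z.1) ⟨z.2.val, by have := z.2.isLt; have := hc (g z.1); omega⟩ k *
      v ⟨0, hm⟩ ⟨c ⟨0, hm⟩ + (e0.symm z').val, by
        have := (e0.symm z').isLt; have := hc ⟨0, hm⟩; omega⟩ k

def Cblk (hm : 0 < m) (hc : ∀ j, c j ≤ d) (e0 : Fin (d - c ⟨0, hm⟩) ≃ Z1 c) :
    Matrix ((r : Fin (m - 1)) × Fin (d - c (g r))) (Z1 c) ℝ :=
  Matrix.of fun z z' =>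
    ∑ k, v (g z.1) ⟨c (g z.1) + z.2.val, by have := z.2.isLt; omega⟩ k *
      v ⟨0, hm⟩ ⟨c ⟨0, hm⟩ + (e0.symm z').val, by
        have := (e0.symm z').isLt; have := hc ⟨0, hm⟩; omega⟩ k

def Bblk (hm : 0 < m) (hc : ∀ j, c j ≤ d) (e0 : Fin (d - c ⟨0, hm⟩) ≃ Z1 c) :
    Matrix (Fin (c ⟨0, hm⟩)) (Fin (d - c ⟨0, hm⟩)) ℝ :=
  Matrix.of fun i t =>
    ∑ k, v ⟨0, hm⟩ ⟨i.val, by have := i.isLt; have := hc ⟨0, hm⟩; omega⟩ k *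
      v (g (e0 t).1) ⟨(e0 t).2.val, by have := (e0 t).2.isLt; have := hc (g (e0 t).1); omega⟩ k

def Dblk (hm : 0 < m) (hc : ∀ j, c j ≤ d) (e0 : Fin (d - c ⟨0, hm⟩) ≃ Z1 c) :
    Matrix (Fin (d - c ⟨0, hm⟩)) (Fin (d - c ⟨0, hm⟩)) ℝ :=
  Matrix.of fun t t' =>
    ∑ k, v ⟨0, hm⟩ ⟨c ⟨0, hm⟩ + t.val, by have := t.isLt; omega⟩ k *
      v (g (e0 t').1) ⟨(e0 t').2.val, by
        have := (e0 t').2.isLt; have := hc (g (e0 t').1); omega⟩ k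

def Nf (hc : ∀ j, c j ≤ d) : Matrix (Fin d) ((j : Fin m) × Fin (c j)) ℝ :=
  Matrix.of fun i q =>
    v q.1 ⟨(q.2 : ℕ), by have h1 := q.2.isLt; have h2 := hc q.1; omega⟩ i

def Nf' (hm : 0 < m) (hc : ∀ j, c j ≤ d) : Matrix (Fin d) ((j : Fin m) × Fin (c j)) ℝ :=
  Matrix.of fun i q =>
    ∑ k, v ⟨0, hm⟩ i k * v q.1 ⟨(q.2 : ℕ), by have h1 := q.2.isLt; have h2 := hc q.1; omega⟩ k

/-- the block-diagonal rotation matrix for M -/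
def Bm : Matrix (Fin (m - 1) × Fin d) (Fin (m - 1) × Fin d) ℝ :=
  Matrix.of fun p q => if p.1 = q.1 then v (g p.1) p.2 q.2 else 0

/-- the rotation matrix for N -/
def Bn (hm : 0 < m) : Matrix (Fin d) (Fin d) ℝ :=
  Matrix.of fun i k => v ⟨0, hm⟩ i k

theorem hvv (hv : ∀ j, Orthonormal ℝ (v j)) (j : Fin m) (a b : Fin d) :
    ∑ k, v j a k * v j b k = if a = b then 1 else 0 := by
  have h := orthonormal_iff_ite.mp (hv j) a b
  simpa [PiLp.inner_apply, mul_comm] using h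

theorem abs_det_eq_one_of_mul_transpose {n : Type*} [Fintype n] [DecidableEq n]
    {X : Matrix n n ℝ} (h : X * X.transpose = 1) : |X.det| = 1 := by
  have h2 := congrArg Matrix.det h
  rw [Matrix.det_mul, Matrix.det_transpose, Matrix.det_one] at h2
  rcases mul_self_eq_one_iff.mp h2 with h3 | h3 <;> rw [h3] <;> norm_num

theorem Bm_mul_transpose (hv : ∀ j, Orthonormal ℝ (v j)) :
    Bm v * (Bm v).transpose = 1 := by
  ext ⟨r, i⟩ ⟨r', i'⟩
  rw [Matrix.mul_apply, Fintype.sum_prod_type]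
  by_cases hrr : r = r'
  · subst hrr
    rw [Finset.sum_eq_single r]
    · have he : ∀ k, (Bm v) (r, i) (r, k) * (Bm v).transpose (r, k) (r, i') =
          v (g r) i k * v (g r) i' k := by
        intro k; simp [Bm]
      rw [Finset.sum_congr rfl (fun k _ => he k), hvv v hv (g r) i i']
      simp [Matrix.one_apply, Prod.ext_iff]
    · intro b _ hb
      apply Finset.sum_eq_zero
      intro k _
      simp [Bm, (show ¬ r = b from fun h => hb h.symm)]
    · simp
  · rw [Finset.sum_eq_zero, Matrix.one_apply_ne (by simp [Prod.ext_iff, hrr])]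
    intro b _
    apply Finset.sum_eq_zero
    intro k _
    rcases eq_or_ne r b with h | h
    · subst h
      simp [Bm, (show ¬ r' = r from fun h => hrr h.symm)]
    · simp [Bm, h]

theorem Bn_mul_transpose (hm : 0 < m) (hv : ∀ j, Orthonormal ℝ (v j)) :
    Bn v hm * (Bn v hm).transpose = 1 := by
  ext i i'
  rw [Matrix.mul_apply]
  simp only [Bn, Matrix.transpose_apply, Matrix.of_apply]
  rw [hvv v hv ⟨0, hm⟩ i i']
  simp [Matrix.one_apply]

theorem mulM (hc : ∀ j, c j ≤ d) (hv : ∀ j, Orthonormal ℝ (v j)) :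
    Bm v * Fm c v hc = Fm' c v hc := by
  ext ⟨r, i⟩ ⟨s, l⟩
  rw [Matrix.mul_apply, Fintype.sum_prod_type]
  rw [Finset.sum_eq_single r]
  · by_cases h0 : (s : ℕ) = 0
    · simp [Fm, Fm', Bm, h0]
    · by_cases h1 : (r : ℕ) + 1 = (s : ℕ)
      · have hgs : g r = s := Fin.ext (by simp [g]; omega)
        subst hgs
        simp only [Fm, Fm', Bm, Matrix.of_apply, if_pos rfl, h0, h1, false_or,
          or_true, if_true, ite_true, ite_false, if_false]
        rw [hvv v hv (g r) i]
        simp [Fin.ext_iff]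
      · simp [Fm, Fm', Bm, h0, h1]
  · intro b _ hb
    apply Finset.sum_eq_zero
    intro k _
    simp [Bm, (show ¬ r = b from fun h => hb h.symm)]
  · simp

theorem mulN (hm : 0 < m) (hc : ∀ j, c j ≤ d) :
    Bn v hm * Nf c v hc = Nf' c v hm hc := by
  ext i ⟨j, l⟩
  rw [Matrix.mul_apply]
  simp [Bn, Nf, Nf']

theorem blocksM (hm : 0 < m) (hc : ∀ j, c j ≤ d) (e0 : Fin (d - c ⟨0, hm⟩) ≃ Z1 c) :
    (Fm' c v hc).submatrix (eRow c hc) (eColM c hm e0) =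
      Matrix.fromBlocks (Ablk c v hm hc e0) 0 (Cblk c v hm hc e0) 1 := by
  ext z z'
  rcases z with ⟨r, i⟩ | ⟨r, t⟩ <;> rcases z' with z' | ⟨r', t'⟩
  · simp [Fm', eRow, eColM, Ablk]
  · simp only [Matrix.submatrix_apply, Matrix.fromBlocks_apply₁₂, Matrix.zero_apply]
    dsimp [eRow, eColM, Fm']
    rw [if_neg (by simp [g])]
    split_ifs with h1 h2
    · exfalso
      have hrr : r = r' := Fin.ext (by simp only [g] at h1; omega)
      subst hrr
      have := i.isLt
      omega
    · rfl
    · rfl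
  · simp [Fm', eRow, eColM, Cblk]
  · simp only [Matrix.submatrix_apply, Matrix.fromBlocks_apply₂₂]
    dsimp [eRow, eColM, Fm']
    rw [if_neg (by simp [g])]
    rcases eq_or_ne r r' with h | h
    · subst h
      rw [if_pos (by simp [g])]
      by_cases ht : t = t'
      · subst ht
        rw [if_pos rfl, Matrix.one_apply_eq]
      · rw [if_neg (fun hh => ht (Fin.ext (by omega))),
          Matrix.one_apply_ne (by simp [ht])]
    · rw [if_neg (fun hh => h (Fin.ext (by simp only [g] at hh; omega))),
        Matrix.one_apply_ne (by simp [h])]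

theorem blocksN (hm : 0 < m) (hc : ∀ j, c j ≤ d) (hv : ∀ j, Orthonormal ℝ (v j))
    (e0 : Fin (d - c ⟨0, hm⟩) ≃ Z1 c) :
    (Nf' c v hm hc).submatrix (eRowN c hm hc) (eColN c hm e0) =
      Matrix.fromBlocks 1 (Bblk c v hm hc e0) 0 (Dblk c v hm hc e0) := by
  ext z z'
  rcases z with i | t <;> rcases z' with l | t'
  · simp only [Matrix.submatrix_apply, Matrix.fromBlocks_apply₁₁]
    dsimp [eRowN, eColN, Nf']
    rw [hvv v hv ⟨0, hm⟩ _ _]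
    simp [Matrix.one_apply, Fin.ext_iff]
  · simp [Nf', eRowN, eColN, Bblk]
  · simp only [Matrix.submatrix_apply, Matrix.fromBlocks_apply₂₁, Matrix.zero_apply]
    dsimp [eRowN, eColN, Nf']
    rw [hvv v hv ⟨0, hm⟩ _ _,
      if_neg (fun hh => by
        have h2 := l.isLt
        have h3 := congrArg Fin.val hh
        simp only at h3
        omega)]
  · simp [Nf', eRowN, eColN, Dblk]

theorem DA (hm : 0 < m) (hc : ∀ j, c j ≤ d) (e0 : Fin (d - c ⟨0, hm⟩) ≃ Z1 c) :
    Dblk c v hm hc e0 = ((Ablk c v hm hc e0).transpose).submatrix e0 e0 := by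
  ext t t'
  simp only [Matrix.submatrix_apply, Matrix.transpose_apply, Ablk, Dblk, Matrix.of_apply,
    Equiv.symm_apply_apply]
  exact Finset.sum_congr rfl (fun k _ => mul_comm _ _)

end Stmt6

open Stmt6 in
theorem stmt_6 (d m : ℕ) (hm : 2 ≤ m)
    (c : Fin m → ℕ) (hc : ∀ j, c j ≤ d) (hcs : ∑ j, c j = d)
    -- for each `j`, `v j 0, …, v j (d-1)` is an orthonormal basis of `ℝ^d`
    (v : Fin m → Fin d → EuclideanSpace ℝ (Fin d))
    (hv : ∀ j, Orthonormal ℝ (v j))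
    -- an identification of the column index set `Σ s, Fin (d - c s)` of the block matrix
    -- with its row index set `Fin (m-1) × Fin d` (the two have the same cardinality)
    (σ : ((s : Fin m) × Fin (d - c s)) ≃ (Fin (m - 1) × Fin d))
    -- an identification of the column index set `Σ j, Fin (c j)` of `N` with `Fin d`
    (τ : ((j : Fin m) × Fin (c j)) ≃ Fin d) :
    |(Matrix.of fun (p q : Fin (m - 1) × Fin d) =>
        -- block matrix `M`: block column `s = (σ.symm q).1`, column `l = (σ.symm q).2`
        -- within the block, row block `r = p.1`, row `i = p.2`
        if ((σ.symm q).1 : ℕ) = 0 ∨ (p.1 : ℕ) + 1 = ((σ.symm q).1 : ℕ) then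
          v (σ.symm q).1
            (⟨c (σ.symm q).1 + ((σ.symm q).2 : ℕ), by
              have h1 := (σ.symm q).2.isLt
              have h2 := hc (σ.symm q).1
              omega⟩ : Fin d) p.2
        else 0).det| =
    |(Matrix.of fun (i q : Fin d) =>
        v (τ.symm q).1
          (⟨((τ.symm q).2 : ℕ), by
            have h1 := (τ.symm q).2.isLt
            have h2 := hc (τ.symm q).1
            omega⟩ : Fin d) i).det| := by
  have hm0 : 0 < m := by omega
  have hm1 : m - 1 + 1 = m := by omega
  have hsum : c ⟨0, hm0⟩ + ∑ r : Fin (m - 1), c (g r) = d := by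
    have h1 : ∑ i : Fin (m - 1 + 1), c (finCongr hm1 i) = d := by
      rw [Equiv.sum_comp (finCongr hm1) c]; exact hcs
    rw [Fin.sum_univ_succ] at h1
    have e1 : (finCongr hm1 0 : Fin m) = ⟨0, hm0⟩ := by
      apply Fin.ext; simp
    have e2 : ∀ r : Fin (m - 1), finCongr hm1 r.succ = g r := fun r => by
      apply Fin.ext; simp [g]
    rw [e1] at h1
    rw [Finset.sum_congr rfl (fun r _ => by rw [e2 r])] at h1
    exact h1
  have hcard : Fintype.card (Fin (d - c ⟨0, hm0⟩)) = Fintype.card (Z1 c) := by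
    have h0 := hc ⟨0, hm0⟩
    simp only [Fintype.card_fin, Fintype.card_sigma]
    omega
  obtain ⟨e0⟩ := Fintype.card_eq.mp hcard
  have habsBm : |(Bm v).det| = 1 :=
    abs_det_eq_one_of_mul_transpose (Bm_mul_transpose v hv)
  have habsBn : |(Bn v hm0).det| = 1 :=
    abs_det_eq_one_of_mul_transpose (Bn_mul_transpose v hm0 hv)
  -- M side
  set Gm : Matrix (Fin (m - 1) × Fin d) (Fin (m - 1) × Fin d) ℝ :=
    Matrix.of fun p q => Fm c v hc p (σ.symm q) with hGm
  set Gm' : Matrix (Fin (m - 1) × Fin d) (Fin (m - 1) × Fin d) ℝ :=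
    Matrix.of fun p q => Fm' c v hc p (σ.symm q) with hGm'
  set S := (Fm' c v hc).submatrix (eRow c hc) (eColM c hm0 e0) with hS
  have hmul' : Bm v * Gm = Gm' := by
    ext p q
    have h := congrFun (congrFun (mulM c v hc hv) p) (σ.symm q)
    rw [Matrix.mul_apply] at h
    rw [Matrix.mul_apply]
    exact h
  have habs1 : |Gm.det| = |Gm'.det| := by
    calc |Gm.det| = |(Bm v).det| * |Gm.det| := by rw [habsBm, one_mul]
    _ = |((Bm v) * Gm).det| := by rw [Matrix.det_mul, abs_mul]
    _ = |Gm'.det| := by rw [hmul']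
  have hsub : Gm' = S.submatrix (eRow c hc).symm (σ.symm.trans (eColM c hm0 e0).symm) := by
    ext p q
    simp [hGm', hS, Matrix.submatrix_apply]
  have habs2 : |Gm'.det| = |S.det| := by
    rw [hsub]
    exact Matrix.abs_det_submatrix_equiv_equiv _ _ _
  have habs3 : |S.det| = |(Ablk c v hm0 hc e0).det| := by
    rw [hS, blocksM c v hm0 hc e0, Matrix.det_fromBlocks_zero₁₂, Matrix.det_one, mul_one]
  -- N side
  set Gn : Matrix (Fin d) (Fin d) ℝ :=
    Matrix.of fun i q => Nf c v hc i (τ.symm q) with hGn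
  set Gn' : Matrix (Fin d) (Fin d) ℝ :=
    Matrix.of fun i q => Nf' c v hm0 hc i (τ.symm q) with hGn'
  set T := (Nf' c v hm0 hc).submatrix (eRowN c hm0 hc) (eColN c hm0 e0) with hT
  have hmulN' : Bn v hm0 * Gn = Gn' := by
    ext p q
    have h := congrFun (congrFun (mulN c v hm0 hc) p) (τ.symm q)
    rw [Matrix.mul_apply] at h
    rw [Matrix.mul_apply]
    exact h
  have habs1N : |Gn.det| = |Gn'.det| := by
    calc |Gn.det| = |(Bn v hm0).det| * |Gn.det| := by rw [habsBn, one_mul]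
    _ = |((Bn v hm0) * Gn).det| := by rw [Matrix.det_mul, abs_mul]
    _ = |Gn'.det| := by rw [hmulN']
  have hsubN : Gn' = T.submatrix (eRowN c hm0 hc).symm (τ.symm.trans (eColN c hm0 e0).symm) := by
    ext p q
    simp [hGn', hT, Matrix.submatrix_apply]
  have habs2N : |Gn'.det| = |T.det| := by
    rw [hsubN]
    exact Matrix.abs_det_submatrix_equiv_equiv _ _ _
  have habs3N : |T.det| = |(Dblk c v hm0 hc e0).det| := by
    rw [hT, blocksN c v hm0 hc hv e0, Matrix.det_fromBlocks_zero₂₁, Matrix.det_one, one_mul]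
  have habs4 : |(Dblk c v hm0 hc e0).det| = |(Ablk c v hm0 hc e0).det| := by
    rw [DA c v hm0 hc e0, Matrix.det_submatrix_equiv_self, Matrix.det_transpose]
  exact (habs1.trans (habs2.trans habs3)).trans
    ((habs1N.trans (habs2N.trans (habs3N.trans habs4))).symm)
end
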